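/- arXiv:1701.06874 — 13 statements merged into one kernel-verified Lean document; each statement's English description precedes it below -/
import Mathlib

section
/- Let c ∈ F_2^n with L(c,1) ≤ t and let 1 ≤ i ≤ n−t. Then c(δ_i) ≠ c(δ_{i+t}); moreover, if j is the smallest index at which c(δ_i) and c(δ_{i+t}) differ, then i ≤ j ≤ i+t−1 and c equals the concatenation of the first j coordinates of c(δ_{i+t}) with coordinates j through n−1 of c(δ_i). -/
/-- `c` has a contiguous subvector of length `len` with period `ℓ`
(0-indexed starting position `s`). -/
def HasPeriodicSub {n : ℕ} (c : Fin n → ZMod 2) (ℓ len : ℕ) : Prop :=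
  ∃ s : ℕ, ∃ _h : s + len ≤ n,
    ∀ j : ℕ, (hj : j + ℓ + 1 ≤ len) →
      c ⟨s + j, by omega⟩ = c ⟨s + j + ℓ, by omega⟩

/-- `L(c,ℓ) ≤ t`: every contiguous subvector of `c` with period `ℓ` has length at most `t`. -/
def LLe {n : ℕ} (c : Fin n → ZMod 2) (ℓ t : ℕ) : Prop :=
  ∀ len : ℕ, HasPeriodicSub c ℓ len → len ≤ t

/-- `c(δ_i)`: delete the `i`-th coordinate (1-indexed) of `c`. -/
def delete1 {n : ℕ} (c : Fin n → ZMod 2) (i : ℕ) : Fin (n - 1) → ZMod 2 :=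
  fun j =>
    if _h : j.val + 1 < i then c ⟨j.val, by have := j.isLt; omega⟩
    else c ⟨j.val + 1, by have := j.isLt; omega⟩

/-- if `L(c,1) ≤ t` and `1 ≤ i ≤ n - t`, then `c(δ_i) ≠ c(δ_{i+t})`;
moreover, if `j` is the smallest (1-indexed) position at which they differ, then
`i ≤ j ≤ i+t-1` and `c` is the concatenation of the first `j` coordinates of
`c(δ_{i+t})` with coordinates `j` through `n-1` of `c(δ_i)`. -/
theorem stmt1 {n t : ℕ} (ht : 1 ≤ t) (c : Fin n → ZMod 2) (hL : LLe c 1 t)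
    (i : ℕ) (hi : 1 ≤ i) (hin : i ≤ n - t) :
    delete1 c i ≠ delete1 c (i + t) ∧
    ∀ j : ℕ, (hj1 : 1 ≤ j) → (hjn : j ≤ n - 1) →
      delete1 c i ⟨j - 1, by omega⟩ ≠ delete1 c (i + t) ⟨j - 1, by omega⟩ →
      (∀ j' : ℕ, (h1 : 1 ≤ j') → (h2 : j' < j) →
        delete1 c i ⟨j' - 1, by omega⟩ = delete1 c (i + t) ⟨j' - 1, by omega⟩) →
      i ≤ j ∧ j ≤ i + t - 1 ∧
      ∀ k : ℕ, (hk : k < n) →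
        (∀ _hkj : k + 1 ≤ j, c ⟨k, hk⟩ = delete1 c (i + t) ⟨k, by omega⟩) ∧
        (∀ _hjk : j ≤ k, c ⟨k, hk⟩ = delete1 c i ⟨k - 1, by omega⟩) := by
  have hn : i + t ≤ n := by omega
  -- evaluation lemmas for delete1
  have del_lt : ∀ (m j : ℕ) (h : j + 1 < m) (hj : j < n - 1),
      delete1 c m ⟨j, hj⟩ = c ⟨j, by omega⟩ := by
    intro m j h hj; exact dif_pos h
  have del_ge : ∀ (m j : ℕ) (h : ¬ (j + 1 < m)) (hj : j < n - 1),
      delete1 c m ⟨j, hj⟩ = c ⟨j + 1, by omega⟩ := by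
    intro m j h hj; exact dif_neg h
  have key : ¬ ∀ j' : ℕ, (_h1 : i ≤ j') → (_h2 : j' ≤ i + t - 1) →
      c ⟨j' - 1, by omega⟩ = c ⟨j', by omega⟩ := by
    intro hall
    have hsub : HasPeriodicSub c 1 (t + 1) := by
      refine ⟨i - 1, by omega, ?_⟩
      intro j hj
      have h1 : (⟨i - 1 + j, by omega⟩ : Fin n) = ⟨(i + j) - 1, by omega⟩ :=
        Fin.ext (by simp; omega)
      have h2 : (⟨i - 1 + j + 1, by omega⟩ : Fin n) = ⟨i + j, by omega⟩ :=
        Fin.ext (by simp; omega)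
      rw [h1, h2]
      exact hall (i + j) (by omega) (by omega)
    have := hL (t + 1) hsub
    omega
  constructor
  · intro heq
    apply key
    intro j' hj1 hj2
    have hlt : j' - 1 < n - 1 := by omega
    have h := congrFun heq ⟨j' - 1, hlt⟩
    rw [del_ge i (j' - 1) (by omega) hlt, del_lt (i + t) (j' - 1) (by omega) hlt] at h
    have h1 : (⟨j' - 1 + 1, by omega⟩ : Fin n) = ⟨j', by omega⟩ := Fin.ext (by simp; omega)
    rw [h1] at h
    exact h.symm
  · intro j hj1 hjn hne _hmin
    have hlt : j - 1 < n - 1 := by omega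
    have hij : i ≤ j := by
      by_contra hcon
      apply hne
      rw [del_lt i (j - 1) (by omega) hlt, del_lt (i + t) (j - 1) (by omega) hlt]
    have hjt : j ≤ i + t - 1 := by
      by_contra hcon
      apply hne
      rw [del_ge i (j - 1) (by omega) hlt, del_ge (i + t) (j - 1) (by omega) hlt]
    refine ⟨hij, hjt, ?_⟩
    intro k hk
    constructor
    · intro hkj
      rw [del_lt (i + t) k (by omega) (by omega)]
    · intro hjk
      have hlt' : k - 1 < n - 1 := by omega
      rw [del_ge i (k - 1) (by omega) hlt']
      exact congrArg c (Fin.ext (by simp; omega))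
end

section
/- (Theorem 3: two-head single-deletion correction.) Let c, c' ∈ C_1(n,1,t) and let 1 ≤ i ≤ n−t and 1 ≤ i' ≤ n−t. If c(δ_i) = c'(δ_{i'}) and c(δ_{i+t}) = c'(δ_{i'+t}), then c = c'. (Thus C_1(n,1,t) is a two-head single-deletion-correcting code when the two heads are positioned t locations apart.) -/
/-- The code `C_1(n,1,t) = {c ∈ F_2^n : L(c,1) ≤ t}`. -/
def C1set (n t : ℕ) : Set (Fin n → ZMod 2) := {c | LLe c 1 t}

lemma del_pt {n : ℕ} {c c' : Fin n → ZMod 2} {i i' : ℕ}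
    (h : delete1 c i = delete1 c' i') (j : ℕ) (hj : j + 1 < n) :
    (if j + 1 < i then c ⟨j, by omega⟩ else c ⟨j + 1, hj⟩)
      = (if j + 1 < i' then c' ⟨j, by omega⟩ else c' ⟨j + 1, hj⟩) := by
  have := congrFun h ⟨j, by omega⟩
  simpa [delete1] using this

lemma key {n t : ℕ} (ht : 1 ≤ t) (c c' : Fin n → ZMod 2) (hc : LLe c 1 t)
    (i i' : ℕ) (hi : 1 ≤ i) (hin : i ≤ n - t)
    (hle : i ≤ i')
    (h1 : delete1 c i = delete1 c' i')
    (h2 : delete1 c (i + t) = delete1 c' (i' + t)) :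
    c = c' := by
  have hnt : i + t ≤ n := by omega
  by_cases hcase : i + t ≤ i'
  · -- contradiction: c has a run of length t+1
    exfalso
    have hsub : HasPeriodicSub c 1 (t + 1) := by
      refine ⟨i - 1, by omega, fun j hj => ?_⟩
      have hjn : (i - 1 + j) + 1 < n := by omega
      have e2 := del_pt h2 (i - 1 + j) hjn
      rw [if_pos (by omega), if_pos (by omega)] at e2
      have e1 := del_pt h1 (i - 1 + j) hjn
      rw [if_neg (by omega), if_pos (by omega)] at e1
      exact e2.trans e1.symm
    have := hc (t + 1) hsub
    omega
  · -- c = c' pointwise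
    funext p
    obtain ⟨p, hp⟩ := p
    by_cases hp1 : p + 1 < i + t
    · have e := del_pt h2 p (by omega)
      rw [if_pos hp1, if_pos (by omega)] at e
      exact e
    · have hp0 : 1 ≤ p := by omega
      obtain ⟨q, rfl⟩ : ∃ q, p = q + 1 := ⟨p - 1, by omega⟩
      have e := del_pt h1 q (by omega)
      rw [if_neg (by omega), if_neg (by omega)] at e
      exact e

/-- Theorem 3: `C_1(n,1,t)` is a two-head single-deletion-correcting
code when the two heads are positioned `t` locations apart. -/
theorem stmt2 {n t : ℕ} (ht : 1 ≤ t)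
    (c c' : Fin n → ZMod 2) (hc : c ∈ C1set n t) (hc' : c' ∈ C1set n t)
    (i i' : ℕ) (hi : 1 ≤ i) (hin : i ≤ n - t) (hi' : 1 ≤ i') (hin' : i' ≤ n - t)
    (h1 : delete1 c i = delete1 c' i')
    (h2 : delete1 c (i + t) = delete1 c' (i' + t)) :
    c = c' := by
  rcases le_total i i' with h | h
  · exact key ht c c' hc i i' hi hin h h1 h2
  · exact (key ht c' c hc' i' i hi' hin' h h1.symm h2.symm).symm
end

section
/- Let c ∈ F_2^n and let i, b, t be positive integers with i + t + b − 1 ≤ n. If the length-(i+t−1) prefix of c(δ_{[i,b]}) equals the length-(i+t−1) prefix of c(δ_{[i+t,b]}), then c_j = c_{j+b} for all i ≤ j ≤ i+t−1; that is, the contiguous subvector (c_i, c_{i+1}, …, c_{i+t+b−1}) of length t+b has period b, so L(c,b) ≥ t + b. -/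
/-- `c(δ_{[i,b]})`: delete the `b` consecutive coordinates `c_i, …, c_{i+b-1}`
(1-indexed) of `c`. -/
def deleteBurst {n : ℕ} (c : Fin n → ZMod 2) (i b : ℕ) : Fin (n - b) → ZMod 2 :=
  fun j =>
    if _h : j.val + 1 < i then c ⟨j.val, by have := j.isLt; omega⟩
    else c ⟨j.val + b, by have := j.isLt; omega⟩

/-- if the length-`(i+t-1)` prefixes of `c(δ_{[i,b]})` and
`c(δ_{[i+t,b]})` agree, then `c_j = c_{j+b}` for all `i ≤ j ≤ i+t-1`; that is,
the contiguous subvector `(c_i, …, c_{i+t+b-1})` of length `t+b` has period `b`,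
so `L(c,b) ≥ t+b`. -/
theorem stmt3 {n : ℕ} (c : Fin n → ZMod 2) (i b t : ℕ)
    (hi : 1 ≤ i) (hb : 1 ≤ b) (ht : 1 ≤ t) (hn : i + t + b - 1 ≤ n)
    (hpre : ∀ j : ℕ, (hj : j + 1 ≤ i + t - 1) →
      deleteBurst c i b ⟨j, by omega⟩ = deleteBurst c (i + t) b ⟨j, by omega⟩) :
    (∀ j : ℕ, (h1 : i ≤ j) → (h2 : j ≤ i + t - 1) →
      c ⟨j - 1, by omega⟩ = c ⟨j + b - 1, by omega⟩) ∧
    HasPeriodicSub c b (t + b) := by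
  have key : ∀ j : ℕ, i - 1 ≤ j → (hj : j + 1 ≤ i + t - 1) →
      c ⟨j, by omega⟩ = c ⟨j + b, by omega⟩ := by
    intro j h1 h2
    have h := hpre j h2
    simp only [deleteBurst] at h
    rw [dif_neg (by omega), dif_pos (by omega)] at h
    exact h.symm
  refine ⟨fun j h1 h2 => ?_, i - 1, by omega, fun j hj => key (i - 1 + j) (by omega) (by omega)⟩
  exact (key (j - 1) (by omega) (by omega)).trans (congrArg c (Fin.ext (show j - 1 + b = j + b - 1 by omega)))
end

section
/- (Theorem 5: two-head b-burst-deletion correction.) Let c, c' ∈ C_2(n,b,t) and let i, i' be positions with i + t + b − 1 ≤ n and i' + t + b − 1 ≤ n. If c(δ_{[i,b]}) = c'(δ_{[i',b]}) and c(δ_{[i+t,b]}) = c'(δ_{[i'+t,b]}), then c = c'. (Thus C_2(n,b,t) is a two-head b-burst-deletion-correcting code when the two heads are positioned t locations apart.) -/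
/-- The code `C_2(n,b,t) = {c ∈ F_2^n : L(c,b) ≤ t}`. -/
def C2set (n b t : ℕ) : Set (Fin n → ZMod 2) := {c | LLe c b t}

lemma db_left {n b : ℕ} {c c' : Fin n → ZMod 2} {i i' : ℕ}
    (h : deleteBurst c i b = deleteBurst c' i' b) (k : ℕ) (hk : k < n - b)
    (g1 : k + 1 < i) (g2 : k + 1 < i') :
    c ⟨k, by omega⟩ = c' ⟨k, by omega⟩ := by
  have := congrFun h ⟨k, hk⟩
  simp only [deleteBurst] at this
  rw [dif_pos (by simpa using g1), dif_pos (by simpa using g2)] at this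
  exact this

lemma db_right {n b : ℕ} {c c' : Fin n → ZMod 2} {i i' : ℕ}
    (h : deleteBurst c i b = deleteBurst c' i' b) (k : ℕ) (hk : k < n - b)
    (g1 : i ≤ k + 1) (g2 : i' ≤ k + 1) :
    c ⟨k + b, by omega⟩ = c' ⟨k + b, by omega⟩ := by
  have := congrFun h ⟨k, hk⟩
  simp only [deleteBurst] at this
  rw [dif_neg (by simpa using g1), dif_neg (by simpa using g2)] at this
  exact this

lemma db_mid {n b : ℕ} {c c' : Fin n → ZMod 2} {i i' : ℕ}
    (h : deleteBurst c i b = deleteBurst c' i' b) (k : ℕ) (hk : k < n - b)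
    (g1 : i ≤ k + 1) (g2 : k + 1 < i') :
    c ⟨k + b, by omega⟩ = c' ⟨k, by omega⟩ := by
  have := congrFun h ⟨k, hk⟩
  simp only [deleteBurst] at this
  rw [dif_neg (by simpa using g1), dif_pos (by simpa using g2)] at this
  exact this

lemma stmt4_aux {n b t : ℕ} (hb : 1 ≤ b) (ht : 1 ≤ t)
    (c c' : Fin n → ZMod 2) (hc : c ∈ C2set n b t)
    (i i' : ℕ) (hi : 1 ≤ i) (hin : i + t + b - 1 ≤ n)
    (hi' : 1 ≤ i') (hin' : i' + t + b - 1 ≤ n) (hii : i ≤ i')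
    (h1 : deleteBurst c i b = deleteBurst c' i' b)
    (h2 : deleteBurst c (i + t) b = deleteBurst c' (i' + t) b) :
    c = c' := by
  -- F4 : c and c' agree on positions m with m + 1 < i + t
  have F4 : ∀ m (hm : m < n), m + 1 < i + t → c ⟨m, hm⟩ = c' ⟨m, hm⟩ := by
    intro m hm hmt
    exact db_left h2 m (by omega) (by omega) (by omega)
  -- F3 : c and c' agree on positions m with i' + b - 1 ≤ m
  have F3 : ∀ m (hm : m < n), i' + b - 1 ≤ m → c ⟨m, hm⟩ = c' ⟨m, hm⟩ := by
    intro m hm hm'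
    have hmb : b ≤ m := by omega
    have := db_right h1 (m - b) (by omega) (by omega) (by omega)
    simpa [Nat.sub_add_cancel hmb] using this
  by_cases hd : i' + b ≤ i + t
  · -- no unknown region
    funext m
    rcases lt_or_ge (m.val + 1) (i + t) with hm | hm
    · exact F4 m.val m.isLt hm
    · exact F3 m.val m.isLt (by omega)
  · -- derive a contradiction with the code property of c
    exfalso
    set L := min (i' - i) t with hL
    have hper : HasPeriodicSub c b (L + b) := by
      refine ⟨i - 1, by omega, ?_⟩
      intro j hj
      have hjL : j + 1 ≤ L := by omega
      have hjd : j + 1 ≤ i' - i := by omega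
      have hjt : j + 1 ≤ t := by omega
      have e1 : c ⟨i - 1 + j, by omega⟩ = c' ⟨i - 1 + j, by omega⟩ :=
        F4 (i - 1 + j) (by omega) (by omega)
      have e2 : c ⟨i - 1 + j + b, by omega⟩ = c' ⟨i - 1 + j, by omega⟩ :=
        db_mid h1 (i - 1 + j) (by omega) (by omega) (by omega)
      exact e1.trans e2.symm
    have := hc (L + b) hper
    omega

/-- Theorem 5: `C_2(n,b,t)` is a two-head `b`-burst-deletion-correcting
code when the two heads are positioned `t` locations apart. -/
theorem stmt4 {n b t : ℕ} (hb : 1 ≤ b) (ht : 1 ≤ t)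
    (c c' : Fin n → ZMod 2) (hc : c ∈ C2set n b t) (hc' : c' ∈ C2set n b t)
    (i i' : ℕ) (hi : 1 ≤ i) (hin : i + t + b - 1 ≤ n)
    (hi' : 1 ≤ i') (hin' : i' + t + b - 1 ≤ n)
    (h1 : deleteBurst c i b = deleteBurst c' i' b)
    (h2 : deleteBurst c (i + t) b = deleteBurst c' (i' + t) b) :
    c = c' := by
  rcases le_total i i' with h | h
  · exact stmt4_aux hb ht c c' hc i i' hi hin hi' hin' h h1 h2
  · exact (stmt4_aux hb ht c' c hc' i' i hi' hin' hi hin h h1.symm h2.symm).symm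
end

section
/- For all positive integers n, b, t with n ≥ b+1 and b ≤ t ≤ n, the map Φ(u) = ((u_1,…,u_b), p_b(u)) is a bijection from C_2(n,b,t) onto F_2^b × R(n−b, t−b); consequently |C_2(n,b,t)| = 2^b · |R(n−b, t−b)|. -/
/-- `c` has `len` consecutive coordinates all equal to zero. -/
def HasZeroRun {n : ℕ} (c : Fin n → ZMod 2) (len : ℕ) : Prop :=
  ∃ s : ℕ, ∃ _h : s + len ≤ n,
    ∀ j : ℕ, (hj : j < len) → c ⟨s + j, by omega⟩ = 0

/-- `R(n,t)`: binary vectors of length `n` whose longest run of zeroes has length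
at most `t`, i.e. containing no `t+1` consecutive zero coordinates. -/
def Rset (n t : ℕ) : Set (Fin n → ZMod 2) :=
  {c | ∀ len : ℕ, HasZeroRun c len → len ≤ t}

/-- The `b`-period check vector `p_b(u) = (u_1 + u_{1+b}, …, u_{m-b} + u_m)`. -/
def pCheck {m : ℕ} (u : Fin m → ZMod 2) (b : ℕ) : Fin (m - b) → ZMod 2 :=
  fun j =>
    u ⟨j.val, by have := j.isLt; omega⟩ + u ⟨j.val + b, by have := j.isLt; omega⟩

/-- The map `Φ(u) = ((u_1,…,u_b), p_b(u))`. -/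
def Phi {n : ℕ} (b : ℕ) (u : Fin n → ZMod 2) :
    (Fin b → ZMod 2) × (Fin (n - b) → ZMod 2) :=
  (fun i => if h : i.val < n then u ⟨i.val, h⟩ else 0, pCheck u b)

lemma z2_add_eq_zero : ∀ a c : ZMod 2, (a + c = 0 ↔ a = c) := by decide
lemma z2_add_add : ∀ a c : ZMod 2, a + (a + c) = c := by decide

def PsiFun (b n : ℕ) (hb : 1 ≤ b) (v : Fin b → ZMod 2) (w : Fin (n - b) → ZMod 2) :
    ℕ → ZMod 2
  | i =>
    if h : i < b then v ⟨i, h⟩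
    else if h2 : i < n then PsiFun b n hb v w (i - b) + w ⟨i - b, by omega⟩
    else 0
termination_by i => i
decreasing_by omega

lemma PsiFun_lt {b n : ℕ} (hb : 1 ≤ b) (v : Fin b → ZMod 2) (w : Fin (n - b) → ZMod 2)
    {i : ℕ} (h : i < b) : PsiFun b n hb v w i = v ⟨i, h⟩ := by
  rw [PsiFun]; simp [h]

lemma PsiFun_ge {b n : ℕ} (hb : 1 ≤ b) (v : Fin b → ZMod 2) (w : Fin (n - b) → ZMod 2)
    {i : ℕ} (h : ¬ i < b) (h2 : i < n) :
    PsiFun b n hb v w i = PsiFun b n hb v w (i - b) + w ⟨i - b, by omega⟩ := by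
  rw [PsiFun]; simp [h, h2]

/-- Left inverse: `Psi (Phi u) = u`. -/
lemma psi_phi {n b : ℕ} (hb : 1 ≤ b) (u : Fin n → ZMod 2) (i : ℕ) (hi : i < n) :
    PsiFun b n hb (Phi b u).1 (Phi b u).2 i = u ⟨i, hi⟩ := by
  induction i using Nat.strong_induction_on with
  | _ i ih =>
    by_cases h : i < b
    · rw [PsiFun_lt hb _ _ h]
      simp only [Phi]
      rw [dif_pos hi]
    · rw [PsiFun_ge hb _ _ h hi]
      rw [ih (i - b) (by omega) (by omega)]
      have key : (Phi b u).2 ⟨i - b, by omega⟩ =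
          u ⟨i - b, by omega⟩ + u ⟨i, hi⟩ := by
        show u ⟨i - b, by omega⟩ + u ⟨i - b + b, by omega⟩ = _
        congr 1
        exact congrArg u (Fin.ext (show i - b + b = i by omega))
      rw [key, z2_add_add]

/-- Right inverse: `Phi (Psi (v,w)) = (v,w)`. -/
lemma phi_psi {n b : ℕ} (hb : 1 ≤ b) (hbn : b ≤ n)
    (v : Fin b → ZMod 2) (w : Fin (n - b) → ZMod 2) :
    Phi b (fun i : Fin n => PsiFun b n hb v w i.val) = (v, w) := by
  refine Prod.ext ?_ ?_
  · funext i
    have h1 : i.val < n := lt_of_lt_of_le i.isLt hbn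
    simp only [Phi]
    rw [dif_pos h1, PsiFun_lt hb v w i.isLt]
  · funext j
    simp only [Phi, pCheck]
    have h2 : j.val + b < n := by have := j.isLt; omega
    have h3 : ¬ j.val + b < b := by omega
    rw [PsiFun_ge hb v w h3 h2]
    have h4 : j.val + b - b = j.val := by omega
    simp only [h4]
    rw [z2_add_add]

/-- Key equivalence: `L(u,b) ≤ t` iff `pCheck u b` has no zero-run longer than `t-b`. -/
lemma lle_iff {n b t : ℕ} (hb : 1 ≤ b) (hn : b + 1 ≤ n) (hbt : b ≤ t)
    (u : Fin n → ZMod 2) :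
    LLe u b t ↔ pCheck u b ∈ Rset (n - b) (t - b) := by
  constructor
  · intro hL len ⟨s, hs, hz⟩
    have : HasPeriodicSub u b (len + b) := by
      refine ⟨s, by omega, ?_⟩
      intro j hj
      have hzj := hz j (by omega)
      simp only [pCheck] at hzj
      have := (z2_add_eq_zero _ _).mp hzj
      convert this using 2 <;> omega
    have := hL (len + b) this
    omega
  · intro hR len ⟨s, hs, hp⟩
    by_cases hlb : len ≤ b
    · omega
    · have : HasZeroRun (pCheck u b) (len - b) := by
        refine ⟨s, by omega, ?_⟩
        intro j hj
        simp only [pCheck]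
        rw [z2_add_eq_zero]
        have := hp j (by omega)
        convert this using 2 <;> omega
      have := hR (len - b) this
      omega

/-- Lemma 6: `Φ` is a bijection from `C_2(n,b,t)` onto
`F_2^b × R(n-b, t-b)`; consequently `|C_2(n,b,t)| = 2^b · |R(n-b, t-b)|`. -/
theorem stmt6 (n b t : ℕ) (hb : 1 ≤ b) (ht : 1 ≤ t)
    (hn : b + 1 ≤ n) (hbt : b ≤ t) (htn : t ≤ n) :
    Set.BijOn (Phi b) (C2set n b t) (Set.univ ×ˢ Rset (n - b) (t - b)) ∧
    (C2set n b t).ncard = 2 ^ b * (Rset (n - b) (t - b)).ncard := by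
  have hbij : Set.BijOn (Phi b) (C2set n b t) (Set.univ ×ˢ Rset (n - b) (t - b)) := by
    refine ⟨?_, ?_, ?_⟩
    · intro u hu
      refine Set.mem_prod.mpr ⟨Set.mem_univ _, ?_⟩
      exact (lle_iff hb hn hbt u).mp hu
    · intro u hu u' hu' heq
      funext i
      have h1 := psi_phi hb u i.val i.isLt
      have h2 := psi_phi hb u' i.val i.isLt
      rw [heq] at h1
      exact h1.symm.trans h2
    · rintro ⟨v, w⟩ ⟨-, hw⟩
      refine ⟨fun i : Fin n => PsiFun b n hb v w i.val, ?_, ?_⟩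
      · have hphi := phi_psi hb (by omega) v w
        show LLe _ b t
        rw [lle_iff hb hn hbt]
        have : pCheck (fun i : Fin n => PsiFun b n hb v w i.val) b = w := by
          have := congrArg Prod.snd hphi
          simpa [Phi] using this
        rw [this]; exact hw
      · exact phi_psi hb (by omega) v w
  refine ⟨hbij, ?_⟩
  have himg : Phi b '' (C2set n b t) = Set.univ ×ˢ Rset (n - b) (t - b) :=
    hbij.image_eq
  have hcard : (C2set n b t).ncard = ((Set.univ : Set (Fin b → ZMod 2)) ×ˢ Rset (n - b) (t - b)).ncard := by
    rw [← himg, Set.ncard_image_of_injOn hbij.injOn]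
  rw [hcard]
  have hprod : ((Set.univ : Set (Fin b → ZMod 2)) ×ˢ Rset (n - b) (t - b)).ncard
      = (Set.univ : Set (Fin b → ZMod 2)).ncard * (Rset (n - b) (t - b)).ncard := by
    rw [← Nat.card_coe_set_eq, ← Nat.card_coe_set_eq, ← Nat.card_coe_set_eq,
      Nat.card_congr (Equiv.Set.prod _ _), Nat.card_prod]
  rw [hprod, Set.ncard_univ, Nat.card_eq_fintype_card]
  congr 1
  simp
end

section
/- For all positive integers n and t with 1 ≤ t ≤ n, 2 · |R(n,t)| = |C_1(n+1, 1, t+1)|. -/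
/-- extend a vector by zeroes -/
def dext {n : ℕ} (d : Fin n → ZMod 2) (j : ℕ) : ZMod 2 :=
  if h : j < n then d ⟨j, h⟩ else 0

/-- "integration" map -/
def Emap (n : ℕ) (p : ZMod 2 × (Fin n → ZMod 2)) : Fin (n + 1) → ZMod 2 :=
  fun i => p.1 + ∑ j ∈ Finset.range i.1, dext p.2 j

lemma Emap_succ (n : ℕ) (p : ZMod 2 × (Fin n → ZMod 2)) (k : ℕ) (hk : k < n)
    (h1 : k + 1 < n + 1) (h2 : k < n + 1) :
    Emap n p ⟨k + 1, h1⟩ = Emap n p ⟨k, h2⟩ + p.2 ⟨k, hk⟩ := by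
  simp [Emap, Finset.sum_range_succ, dext, hk, add_assoc]

lemma Emap_bijective (n : ℕ) : Function.Bijective (Emap n) := by
  constructor
  · rintro ⟨b, d⟩ ⟨b', d'⟩ h
    have h0 : b = b' := by
      have := congrFun h ⟨0, by omega⟩
      simpa [Emap] using this
    have hd : d = d' := by
      funext k
      have h1 := congrFun h ⟨k.1 + 1, by omega⟩
      have h2 := congrFun h ⟨k.1, by omega⟩
      have e1 := Emap_succ n (b, d) k.1 k.2 (by omega) (by omega)
      have e2 := Emap_succ n (b', d') k.1 k.2 (by omega) (by omega)
      simp only [Fin.eta] at e1 e2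
      rw [h1, h2, e2] at e1
      exact (add_left_cancel e1.symm)
    simp [h0, hd, Prod.ext_iff]
  · intro c
    refine ⟨(c ⟨0, by omega⟩, fun j => c ⟨j.1 + 1, by omega⟩ - c ⟨j.1, by omega⟩), ?_⟩
    have aux : ∀ k (hk : k < n + 1),
        Emap n (c ⟨0, by omega⟩, fun j => c ⟨j.1 + 1, by omega⟩ - c ⟨j.1, by omega⟩) ⟨k, hk⟩
          = c ⟨k, hk⟩ := by
      intro k
      induction k with
      | zero => intro hk; simp [Emap]
      | succ k ih =>
        intro hk
        rw [Emap_succ n _ k (by omega) hk (by omega), ih (by omega)]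
        ring
    funext i
    have := aux i.1 i.2
    simpa using this

lemma Emap_mem_iff (n t : ℕ) (b : ZMod 2) (d : Fin n → ZMod 2) :
    Emap n (b, d) ∈ C1set (n + 1) (t + 1) ↔ d ∈ Rset n t := by
  constructor
  · rintro hc len ⟨s, hs, hrun⟩
    have key : len + 1 ≤ t + 1 := by
      refine hc (len + 1) ⟨s, by omega, ?_⟩
      intro j hj
      have hlt : s + j < n := by omega
      have hz : d ⟨s + j, hlt⟩ = 0 := hrun j (by omega)
      rw [Emap_succ n (b, d) (s + j) hlt (by omega) (by omega)]
      simp [hz]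
    omega
  · rintro hd len ⟨s, hs, hper⟩
    match len with
    | 0 => omega
    | len + 1 =>
      have key : len ≤ t := by
        refine hd len ⟨s, by omega, ?_⟩
        intro j hj
        have hlt : s + j < n := by omega
        have hp := hper j (by omega)
        have e := Emap_succ n (b, d) (s + j) hlt (by omega) (by omega)
        rw [← hp] at e
        simpa using (left_eq_add.mp e)
      omega

/-- for all positive integers `n` and `t` with `t ≤ n`,
`2 · |R(n,t)| = |C_1(n+1,1,t+1)|`. -/
theorem stmt7 (n t : ℕ) (hn : 1 ≤ n) (ht : 1 ≤ t) (htn : t ≤ n) :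
    2 * (Rset n t).ncard = (C1set (n + 1) (t + 1)).ncard := by
  have himg : Emap n '' ((Set.univ : Set (ZMod 2)) ×ˢ Rset n t) = C1set (n + 1) (t + 1) := by
    ext c
    constructor
    · rintro ⟨⟨b, d⟩, ⟨-, hR⟩, rfl⟩
      exact (Emap_mem_iff n t b d).2 hR
    · intro hc
      obtain ⟨⟨b, d⟩, rfl⟩ := (Emap_bijective n).2 c
      exact ⟨(b, d), ⟨trivial, (Emap_mem_iff n t b d).1 hc⟩, rfl⟩
  rw [← himg, Set.ncard_image_of_injective _ (Emap_bijective n).1]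
  rw [← Nat.card_coe_set_eq, ← Nat.card_coe_set_eq,
    Nat.card_congr (Equiv.Set.prod _ _), Nat.card_prod]
  congr 1
  rw [Nat.card_congr (Equiv.Set.univ (ZMod 2)), Nat.card_eq_fintype_card, ZMod.card]
end

section
/- For all positive integers n, b, t with n ≥ b+1 and b ≤ t ≤ n, 2 · |C_2(n,b,t)| = 2^b · |C_1(n−b+1, 1, t−b+1)|. -/
/-- The `ℓ`-difference map. -/
def dmap {n : ℕ} (ℓ : ℕ) (c : Fin n → ZMod 2) : Fin (n - ℓ) → ZMod 2 :=
  fun i => c ⟨i.1, by have := i.2; omega⟩ + c ⟨i.1 + ℓ, by have := i.2; omega⟩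

/-- All runs of zeros in `d` have length at most `r`. -/
def ZR {m : ℕ} (d : Fin m → ZMod 2) (r : ℕ) : Prop :=
  ∀ s len : ℕ, ∀ _h : s + len ≤ m,
    (∀ j : ℕ, ∀ _hj : j < len, d ⟨s + j, by omega⟩ = 0) → len ≤ r

lemma zmod2_add_eq_zero_iff (a b : ZMod 2) : a + b = 0 ↔ a = b := by revert a b; decide

lemma LLe_iff {n : ℕ} {ℓ t : ℕ} (h1 : 1 ≤ ℓ) (hlt : ℓ ≤ t) (hln : ℓ ≤ n)
    (c : Fin n → ZMod 2) : LLe c ℓ t ↔ ZR (dmap ℓ c) (t - ℓ) := by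
  constructor
  · intro H s len h hz
    have hps : HasPeriodicSub c ℓ (len + ℓ) := by
      refine ⟨s, by omega, ?_⟩
      intro j hj
      have h0 := hz j (by omega)
      simp only [dmap] at h0
      exact (zmod2_add_eq_zero_iff _ _).mp h0
    have := H _ hps
    omega
  · intro H len hps
    by_cases hle : len ≤ ℓ
    · omega
    · obtain ⟨s, h, hper⟩ := hps
      have key := H s (len - ℓ) (by omega) ?_
      · omega
      · intro j hj
        have h0 := hper j (by omega)
        simp only [dmap]
        exact (zmod2_add_eq_zero_iff _ _).mpr h0

lemma count_lemma (n ℓ : ℕ) (h1ℓ : 1 ≤ ℓ) (hℓ : ℓ ≤ n) (D : Set (Fin (n - ℓ) → ZMod 2)) :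
    {c : Fin n → ZMod 2 | dmap ℓ c ∈ D}.ncard = 2 ^ ℓ * D.ncard := by
  set Φ : (Fin n → ZMod 2) → (Fin ℓ → ZMod 2) × (Fin (n - ℓ) → ZMod 2) :=
    fun c => (fun i => c ⟨i.1, lt_of_lt_of_le i.2 hℓ⟩, dmap ℓ c) with hΦ
  have hinj : Function.Injective Φ := by
    intro c c' h
    have hh : (fun i : Fin ℓ => c ⟨i.1, lt_of_lt_of_le i.2 hℓ⟩)
        = fun i : Fin ℓ => c' ⟨i.1, lt_of_lt_of_le i.2 hℓ⟩ := congrArg Prod.fst h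
    have hd : dmap ℓ c = dmap ℓ c' := congrArg Prod.snd h
    suffices Hk : ∀ k, ∀ hk : k < n, c ⟨k, hk⟩ = c' ⟨k, hk⟩ by
      funext i; exact Hk i.1 i.2
    intro k
    induction k using Nat.strong_induction_on with
    | _ k ih =>
      intro hk
      by_cases hkl : k < ℓ
      · exact congrFun hh ⟨k, hkl⟩
      · have h2 : k - ℓ < n - ℓ := by omega
        have e1 := congrFun hd ⟨k - ℓ, h2⟩
        simp only [dmap] at e1
        have e0 : c ⟨k - ℓ, by omega⟩ = c' ⟨k - ℓ, by omega⟩ := ih (k - ℓ) (by omega) (by omega)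
        rw [e0] at e1
        have e2 := add_left_cancel e1
        have hfin : (⟨k - ℓ + ℓ, by omega⟩ : Fin n) = ⟨k, hk⟩ := by
          apply Fin.ext; simp; omega
        rw [hfin] at e2
        exact e2
  have hcard : Fintype.card (Fin n → ZMod 2)
      = Fintype.card ((Fin ℓ → ZMod 2) × (Fin (n - ℓ) → ZMod 2)) := by
    simp only [Fintype.card_prod, Fintype.card_fun, ZMod.card, Fintype.card_fin]
    rw [← pow_add, Nat.add_sub_cancel' hℓ]
  have hbij : Function.Bijective Φ :=
    (Fintype.bijective_iff_injective_and_card Φ).mpr ⟨hinj, hcard⟩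
  have hset : {c : Fin n → ZMod 2 | dmap ℓ c ∈ D} = Φ ⁻¹' (Set.univ ×ˢ D) := by
    ext c; simp [hΦ]
  rw [hset]
  have himg : Φ '' (Φ ⁻¹' (Set.univ ×ˢ D)) = Set.univ ×ˢ D :=
    Set.image_preimage_eq _ hbij.surjective
  have hkey := Set.ncard_image_of_injective (Φ ⁻¹' (Set.univ ×ˢ D)) hinj
  rw [himg] at hkey
  rw [← hkey]
  rw [← Nat.card_coe_set_eq, Nat.card_congr (Equiv.Set.prod _ _), Nat.card_prod]
  have huniv : Nat.card (Set.univ : Set (Fin ℓ → ZMod 2)) = 2 ^ ℓ := by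
    rw [Nat.card_congr (Equiv.Set.univ _), Nat.card_eq_fintype_card, Fintype.card_fun,
      ZMod.card, Fintype.card_fin]
  rw [huniv, Nat.card_coe_set_eq]

/-- Corollary 2: for all positive integers `n, b, t` with `n ≥ b+1`
and `b ≤ t ≤ n`, `2 · |C_2(n,b,t)| = 2^b · |C_1(n-b+1, 1, t-b+1)|`. -/
theorem stmt8 (n b t : ℕ) (hb : 1 ≤ b) (ht : 1 ≤ t)
    (hn : b + 1 ≤ n) (hbt : b ≤ t) (htn : t ≤ n) :
    2 * (C2set n b t).ncard = 2 ^ b * (C1set (n - b + 1) (t - b + 1)).ncard := by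
  set D : Set (Fin (n - b) → ZMod 2) := {d | ZR d (t - b)} with hD
  have h1 : C2set n b t = {c : Fin n → ZMod 2 | dmap b c ∈ D} := by
    ext c; exact LLe_iff hb hbt (by omega) c
  have h2 : C1set (n - b + 1) (t - b + 1)
      = {c : Fin (n - b + 1) → ZMod 2 | dmap 1 c ∈ D} := by
    ext c; exact LLe_iff le_rfl (by omega) (by omega) c
  have e1 := count_lemma n b hb (by omega) D
  have e2 := count_lemma (n - b + 1) 1 le_rfl (by omega) D
  rw [h1, h2, e1, e2]
  ring
end

section
/- (Correction of a burst of at most b deletions with two heads.) Let c, c' ∈ C_3(n,≤b,t), let b_1 and b_1' be burst lengths with 1 ≤ b_1 ≤ b and 1 ≤ b_1' ≤ b, and let i, i' be positions with i + t + b_1 − 1 ≤ n and i' + t + b_1' − 1 ≤ n. If c(δ_{[i,b_1]}) = c'(δ_{[i',b_1']}) (as sequences, hence in particular b_1 = b_1') and c(δ_{[i+t,b_1]}) = c'(δ_{[i'+t,b_1']}), then c = c'. (Thus C_3(n,≤b,t) can correct a burst of up to b consecutive deletions using two heads at distance t.) -/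
/-- The code `C_3(n,≤b,t) = {c ∈ F_2^n : L(c,ℓ) ≤ t for all 1 ≤ ℓ ≤ b}`. -/
def C3set (n b t : ℕ) : Set (Fin n → ZMod 2) :=
  {c | ∀ ℓ : ℕ, 1 ≤ ℓ → ℓ ≤ b → LLe c ℓ t}

/-- `c(δ_{[i,b]})` as a sequence: delete the `b` consecutive coordinates
`c_i, …, c_{i+b-1}` (1-indexed) of `c`, keeping the rest in order. -/
def deleteBurstL {n : ℕ} (c : Fin n → ZMod 2) (i b : ℕ) : List (ZMod 2) :=
  ((List.finRange n).filter (fun k => decide (k.val + 1 < i ∨ i + b ≤ k.val + 1))).map c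

/-- Extension of `c` to all of `ℕ` by zero. -/
def cExt {n : ℕ} (c : Fin n → ZMod 2) (k : ℕ) : ZMod 2 :=
  if h : k < n then c ⟨k, h⟩ else 0

lemma cExt_eq {n : ℕ} (c : Fin n → ZMod 2) {k : ℕ} (hk : k < n) :
    cExt c k = c ⟨k, hk⟩ := dif_pos hk

/-- Explicit form of `deleteBurstL`. -/
theorem deleteBurst_eq {n : ℕ} (c : Fin n → ZMod 2) (i b : ℕ) (hi : 1 ≤ i)
    (hn : i - 1 + b ≤ n) :
    deleteBurstL c i b =
      (List.range' 0 (i-1) ++ List.range' (i-1+b) (n - (i-1+b))).map (cExt c) := by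
  unfold deleteBurstL
  have hval : (List.finRange n).map Fin.val = List.range n := by
    apply List.ext_getElem <;> simp
  have h1 : ((List.finRange n).filter
      (fun k => decide (k.val + 1 < i ∨ i + b ≤ k.val + 1))).map c
      = ((List.range n).filter (fun m => decide (m + 1 < i ∨ i + b ≤ m + 1))).map (cExt c) := by
    rw [← hval, List.filter_map]
    rw [List.map_map]
    apply List.map_congr_left
    intro a ha
    simp [cExt, Function.comp, a.isLt]
  rw [h1]
  congr 1
  rw [List.range_eq_range']
  have hsplit : List.range' 0 n =
      List.range' 0 (i-1) ++ (List.range' (0+(i-1)) b ++ List.range' ((0+(i-1))+b) (n-(i-1+b))) := by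
    rw [List.range'_append_1, List.range'_append_1]
    congr 1
    omega
  rw [hsplit, List.filter_append, List.filter_append]
  have e1 : List.filter (fun m => decide (m + 1 < i ∨ i + b ≤ m + 1)) (List.range' 0 (i-1))
      = List.range' 0 (i-1) := by
    rw [List.filter_eq_self]
    intro a ha
    rw [List.mem_range'] at ha
    obtain ⟨j, hj, rfl⟩ := ha
    simp only [decide_eq_true_eq]
    omega
  have e2 : List.filter (fun m => decide (m + 1 < i ∨ i + b ≤ m + 1)) (List.range' (0+(i-1)) b)
      = [] := by
    rw [List.filter_eq_nil_iff]
    intro a ha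
    rw [List.mem_range'] at ha
    obtain ⟨j, hj, rfl⟩ := ha
    simp only [decide_eq_true_eq]
    omega
  have e3 : List.filter (fun m => decide (m + 1 < i ∨ i + b ≤ m + 1))
      (List.range' ((0+(i-1))+b) (n-(i-1+b))) = List.range' (i-1+b) (n-(i-1+b)) := by
    have h0 : (0+(i-1))+b = i-1+b := by omega
    rw [h0, List.filter_eq_self]
    intro a ha
    rw [List.mem_range'] at ha
    obtain ⟨j, hj, rfl⟩ := ha
    simp only [decide_eq_true_eq]
    omega
  rw [e1, e2, e3]
  simp

lemma getElem_model {n : ℕ} (c : Fin n → ZMod 2) (i b : ℕ) (hn : i - 1 + b ≤ n)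
    (m : ℕ) (hm : m < n - b)
    (hlen : m < ((List.range' 0 (i-1) ++ List.range' (i-1+b) (n - (i-1+b))).map (cExt c)).length) :
    ((List.range' 0 (i-1) ++ List.range' (i-1+b) (n - (i-1+b))).map (cExt c))[m]'hlen
      = if m < i - 1 then cExt c m else cExt c (m + b) := by
  rw [List.getElem_map]
  by_cases h : m < i - 1
  · rw [if_pos h]
    rw [List.getElem_append_left (by simpa using h)]
    simp
  · rw [if_neg h]
    have hl : (List.range' 0 (i-1)).length ≤ m := by simpa using Nat.le_of_not_lt h
    rw [List.getElem_append_right hl]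
    rw [List.getElem_range'_1]
    congr 1
    simp only [List.length_range']
    omega

/-- Entry-wise consequence of equality of two burst deletions. -/
lemma key_s9 {n : ℕ} (c c' : Fin n → ZMod 2) {i i' b1 : ℕ} (hi : 1 ≤ i) (hi' : 1 ≤ i')
    (hn : i - 1 + b1 ≤ n) (hn' : i' - 1 + b1 ≤ n)
    (heq : deleteBurstL c i b1 = deleteBurstL c' i' b1) (m : ℕ) (hm : m < n - b1) :
    (if m < i - 1 then cExt c m else cExt c (m + b1))
      = (if m < i' - 1 then cExt c' m else cExt c' (m + b1)) := by
  rw [deleteBurst_eq c i b1 hi hn, deleteBurst_eq c' i' b1 hi' hn'] at heq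
  have hlen : m < ((List.range' 0 (i-1) ++ List.range' (i-1+b1) (n - (i-1+b1))).map (cExt c)).length := by
    simp only [List.length_map, List.length_append, List.length_range']
    omega
  have := List.getElem_of_eq heq hlen
  rw [getElem_model c i b1 hn m hm, getElem_model c' i' b1 hn' m hm] at this
  exact this

/-- Main lemma: the WLOG case `i ≤ i'`. -/
lemma main_le {n b t : ℕ} (ht : 1 ≤ t)
    (c c' : Fin n → ZMod 2) (hc : c ∈ C3set n b t)
    (b1 i i' : ℕ)
    (hb1 : 1 ≤ b1) (hb1b : b1 ≤ b)
    (hi : 1 ≤ i) (hin : i + t + b1 - 1 ≤ n)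
    (hi' : 1 ≤ i') (hin' : i' + t + b1 - 1 ≤ n)
    (hii : i ≤ i')
    (h1 : deleteBurstL c i b1 = deleteBurstL c' i' b1)
    (h2 : deleteBurstL c (i + t) b1 = deleteBurstL c' (i' + t) b1) :
    c = c' := by
  set p := i - 1 with hp
  set p' := i' - 1 with hp'
  have hptb : p + t + b1 ≤ n := by omega
  have hptb' : p' + t + b1 ≤ n := by omega
  have key1 := key_s9 c c' hi hi' (by omega) (by omega) h1
  have key2 := key_s9 c c' (i := i + t) (i' := i' + t) (by omega) (by omega)
    (by omega) (by omega) h2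
  -- agreement on the prefix of length p + t
  have A1 : ∀ k : ℕ, k < p + t → (hk : k < n) → c ⟨k, hk⟩ = c' ⟨k, hk⟩ := by
    intro k hkpt hk
    have h := key2 k (by omega)
    rw [if_pos (by omega : k < i + t - 1), if_pos (by omega : k < i' + t - 1)] at h
    rwa [cExt_eq c hk, cExt_eq c' hk] at h
  -- agreement on the suffix starting at p' + b1
  have A2 : ∀ k : ℕ, p' + b1 ≤ k → (hk : k < n) → c ⟨k, hk⟩ = c' ⟨k, hk⟩ := by
    intro k hk1 hk
    have h := key1 (k - b1) (by omega)
    rw [if_neg (by omega : ¬ (k - b1 < i - 1)), if_neg (by omega : ¬ (k - b1 < i' - 1))] at h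
    have hkb : k - b1 + b1 = k := by omega
    rw [hkb] at h
    rwa [cExt_eq c hk, cExt_eq c' hk] at h
  -- the periodic stretch
  have I1 : ∀ j : ℕ, j < min (p' - p) t →
      ∀ (ha : p + j < n) (hb2 : p + j + b1 < n), c ⟨p + j, ha⟩ = c ⟨p + j + b1, hb2⟩ := by
    intro j hj ha hb2
    have h := key1 (p + j) (by omega)
    rw [if_neg (by omega : ¬ (p + j < i - 1)), if_pos (by omega : p + j < i' - 1)] at h
    rw [cExt_eq c hb2, cExt_eq c' ha] at h
    rw [← A1 (p + j) (by omega) ha] at h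
    exact h.symm
  have hper : HasPeriodicSub c b1 (min (p' - p) t + b1) := by
    refine ⟨p, by omega, ?_⟩
    intro j hj
    exact I1 j (by omega) (by omega) (by omega)
  have hle : min (p' - p) t + b1 ≤ t := hc b1 hb1 hb1b _ hper
  have hd : p' + b1 ≤ p + t := by omega
  funext k
  have hk := k.isLt
  have : c ⟨k.val, hk⟩ = c' ⟨k.val, hk⟩ := by
    by_cases hcase : k.val < p + t
    · exact A1 k.val hcase hk
    · exact A2 k.val (by omega) hk
  simpa using this

/-- Theorem 6: `C_3(n,≤b,t)` can correct a burst of up to `b`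
consecutive deletions using two heads at distance `t`. -/
theorem stmt9 {n b t : ℕ} (hb : 1 ≤ b) (ht : 1 ≤ t)
    (c c' : Fin n → ZMod 2) (hc : c ∈ C3set n b t) (hc' : c' ∈ C3set n b t)
    (b1 b1' i i' : ℕ)
    (hb1 : 1 ≤ b1) (hb1b : b1 ≤ b) (hb1' : 1 ≤ b1') (hb1b' : b1' ≤ b)
    (hi : 1 ≤ i) (hin : i + t + b1 - 1 ≤ n)
    (hi' : 1 ≤ i') (hin' : i' + t + b1' - 1 ≤ n)
    (h1 : deleteBurstL c i b1 = deleteBurstL c' i' b1')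
    (h2 : deleteBurstL c (i + t) b1 = deleteBurstL c' (i' + t) b1') :
    c = c' := by
  -- first, b1 = b1'
  have hlen := congrArg List.length h1
  rw [deleteBurst_eq c i b1 hi (by omega), deleteBurst_eq c' i' b1' hi' (by omega)] at hlen
  simp only [List.length_map, List.length_append, List.length_range'] at hlen
  have hbb : b1 = b1' := by omega
  subst hbb
  rcases le_total i i' with hii | hii
  · exact main_le ht c c' hc b1 i i' hb1 hb1b hi hin hi' hin' hii h1 h2
  · exact (main_le ht c' c hc' b1 i' i hb1 hb1b hi' hin' hi hin hii h1.symm h2.symm).symm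
end

section
/- For all positive integers n, b, t with b ≤ t ≤ n, the code C_3(n,≤b,t) satisfies |C_3(n,≤b,t)| ≥ 2^n · (1 − n · (1/2)^{t−b}), i.e., |C_3(n,≤b,t)| ≥ 2^n − n · 2^{n−(t−b)}. -/
open Classical in
/-- The "bad" set of codewords whose window of length `t+1` starting at `s`
has period `ℓ`. -/
noncomputable def Aset (n ℓ s t : ℕ) : Finset (Fin n → ZMod 2) :=
  Finset.univ.filter (fun c => ∀ j : ℕ, ∀ hj : s + j + ℓ < n, j + ℓ ≤ t →
    c ⟨s + j + ℓ, hj⟩ = c ⟨s + j, by omega⟩)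

lemma geom_bound (k m : ℕ) : ∀ b : ℕ,
    (∑ ℓ ∈ Finset.Icc 1 b, k * 2 ^ (m + ℓ)) ≤ k * 2 ^ (m + 1 + b) := by
  intro b
  induction b with
  | zero => simp
  | succ b ih =>
      rw [Finset.sum_Icc_succ_top (by omega : 1 ≤ b + 1)]
      have : k * 2 ^ (m + (b + 1)) ≤ k * 2 ^ (m + 1 + b) := by
        apply Nat.mul_le_mul_left
        apply Nat.pow_le_pow_right (by norm_num)
        omega
      calc (∑ ℓ ∈ Finset.Icc 1 b, k * 2 ^ (m + ℓ)) + k * 2 ^ (m + (b + 1))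
          ≤ k * 2 ^ (m + 1 + b) + k * 2 ^ (m + 1 + b) := Nat.add_le_add ih this
        _ = k * 2 ^ (m + 1 + (b + 1)) := by ring_nf

lemma cardA (n ℓ s t : ℕ) (hl : 1 ≤ ℓ) (hlt : ℓ ≤ t) (hs : s + t < n) :
    (Aset n ℓ s t).card ≤ 2 ^ (n - t - 1 + ℓ) := by
  classical
  set p : Fin n → Prop := fun i => i.val < s + ℓ ∨ s + t < i.val with hp
  have hcard : Fintype.card {i : Fin n // p i} = n - t - 1 + ℓ := by
    have hneg : Finset.univ.filter (fun i => ¬ p i) =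
        Finset.Icc (⟨s + ℓ, by omega⟩ : Fin n) ⟨s + t, by omega⟩ := by
      ext i
      simp only [hp, Finset.mem_filter, Finset.mem_univ, true_and, not_or, not_lt,
        Finset.mem_Icc, Fin.le_def]
    have h1 := Finset.card_filter_add_card_filter_not
      (s := (Finset.univ : Finset (Fin n))) (p := p)
    rw [hneg, Fin.card_Icc] at h1
    simp only [Finset.card_univ, Fintype.card_fin] at h1
    have h2 : (Finset.univ.filter p).card = n - t - 1 + ℓ := by omega
    rw [Fintype.card_subtype]
    convert h2 using 2
  have key : (Aset n ℓ s t).card ≤ Fintype.card ({i : Fin n // p i} → ZMod 2) := by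
    rw [← Finset.card_univ]
    apply Finset.card_le_card_of_injOn (fun c i => c i.val)
      (fun _ _ => Finset.mem_univ _)
    intro c hc c' hc' hcc
    simp only [Aset, Finset.mem_coe, Finset.mem_filter] at hc hc'
    funext i
    obtain ⟨m, hm⟩ : ∃ m, m = i.val := ⟨i.val, rfl⟩
    have : ∀ m, ∀ h : m < n, c ⟨m, h⟩ = c' ⟨m, h⟩ := by
      intro m
      induction m using Nat.strong_induction_on with
      | _ m ih =>
        intro h
        by_cases hcase : p ⟨m, h⟩
        · exact congrFun hcc ⟨⟨m, h⟩, hcase⟩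
        · simp only [hp, not_or, not_lt] at hcase
          obtain ⟨h1, h2⟩ := hcase
          set j := m - s - ℓ with hj
          have hmeq : m = s + j + ℓ := by omega
          have hfin : (⟨m, h⟩ : Fin n) = ⟨s + j + ℓ, by omega⟩ :=
            Fin.mk_eq_mk.mpr hmeq
          rw [hfin, hc.2 j (by omega) (by omega), hc'.2 j (by omega) (by omega)]
          exact ih (s + j) (by omega) (by omega)
    have := this i.val i.isLt
    simpa using this
  calc (Aset n ℓ s t).card ≤ Fintype.card ({i : Fin n // p i} → ZMod 2) := key
    _ = 2 ^ (n - t - 1 + ℓ) := by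
        rw [Fintype.card_fun, hcard]
        norm_num

lemma cover (n b t : ℕ) (hbt : b ≤ t) (c : Fin n → ZMod 2) (hc : c ∉ C3set n b t) :
    c ∈ (Finset.Icc 1 b).biUnion
      (fun ℓ => (Finset.range (n - t)).biUnion (fun s => Aset n ℓ s t)) := by
  classical
  simp only [C3set, Set.mem_setOf_eq, not_forall] at hc
  obtain ⟨ℓ, h1, h2, h3⟩ := hc
  simp only [LLe, not_forall] at h3
  obtain ⟨len, hps, hlen⟩ := h3
  obtain ⟨s, hs, hprop⟩ := hps
  have hlent : t < len := by omega
  have hstn : s + t + 1 ≤ n := by omega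
  refine Finset.mem_biUnion.2 ⟨ℓ, Finset.mem_Icc.2 ⟨h1, h2⟩,
    Finset.mem_biUnion.2 ⟨s, Finset.mem_range.2 (by omega), ?_⟩⟩
  simp only [Aset, Finset.mem_filter, Finset.mem_univ, true_and]
  intro j hj hjt
  exact (hprop j (by omega)).symm

/-- Theorem 7: `|C_3(n,≤b,t)| ≥ 2^n (1 - n (1/2)^{t-b})`, i.e.
`|C_3(n,≤b,t)| ≥ 2^n - n · 2^{n-(t-b)}`. -/
theorem stmt10 (n b t : ℕ) (hn : 1 ≤ n) (hb : 1 ≤ b) (ht : 1 ≤ t)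
    (hbt : b ≤ t) (htn : t ≤ n) :
    (2 : ℤ) ^ n - n * 2 ^ (n - (t - b)) ≤ ((C3set n b t).ncard : ℤ) := by
  classical
  set G : Finset (Fin n → ZMod 2) := Finset.univ.filter (· ∈ C3set n b t) with hG
  set K : Finset (Fin n → ZMod 2) := Finset.univ.filter (· ∉ C3set n b t) with hK
  have hncard : (C3set n b t).ncard = G.card := by
    rw [show C3set n b t = (↑G : Set (Fin n → ZMod 2)) by
      ext c; simp [hG]]
    exact Set.ncard_coe_finset G
  have hsum : G.card + K.card = 2 ^ n := by
    have := Finset.card_filter_add_card_filter_not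
      (s := (Finset.univ : Finset (Fin n → ZMod 2))) (p := (· ∈ C3set n b t))
    rw [Finset.card_univ, Fintype.card_fun] at this
    simpa [hG, hK] using this
  -- bound K
  have hKbound : K.card ≤ n * 2 ^ (n - (t - b)) := by
    have hsub : K ⊆ (Finset.Icc 1 b).biUnion
        (fun ℓ => (Finset.range (n - t)).biUnion (fun s => Aset n ℓ s t)) := by
      intro c hcK
      exact cover n b t hbt c (by simpa [hK] using hcK)
    calc K.card ≤ ((Finset.Icc 1 b).biUnion
          (fun ℓ => (Finset.range (n - t)).biUnion (fun s => Aset n ℓ s t))).card :=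
            Finset.card_le_card hsub
      _ ≤ ∑ ℓ ∈ Finset.Icc 1 b, ((Finset.range (n - t)).biUnion
            (fun s => Aset n ℓ s t)).card := Finset.card_biUnion_le
      _ ≤ ∑ ℓ ∈ Finset.Icc 1 b, ∑ s ∈ Finset.range (n - t), (Aset n ℓ s t).card := by
            apply Finset.sum_le_sum
            intro ℓ _
            exact Finset.card_biUnion_le
      _ ≤ ∑ ℓ ∈ Finset.Icc 1 b, (n - t) * 2 ^ (n - t - 1 + ℓ) := by
            apply Finset.sum_le_sum
            intro ℓ hℓ
            rw [Finset.mem_Icc] at hℓ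
            calc ∑ s ∈ Finset.range (n - t), (Aset n ℓ s t).card
                ≤ ∑ s ∈ Finset.range (n - t), 2 ^ (n - t - 1 + ℓ) := by
                  apply Finset.sum_le_sum
                  intro s hsr
                  rw [Finset.mem_range] at hsr
                  exact cardA n ℓ s t hℓ.1 (hℓ.2.trans hbt) (by omega)
              _ = (n - t) * 2 ^ (n - t - 1 + ℓ) := by
                  rw [Finset.sum_const, Finset.card_range, smul_eq_mul]
      _ ≤ (n - t) * 2 ^ (n - t - 1 + 1 + b) := geom_bound (n - t) (n - t - 1) b
      _ ≤ n * 2 ^ (n - (t - b)) := by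
            rcases Nat.lt_or_ge t n with h | h
            · apply Nat.mul_le_mul (by omega)
              apply Nat.pow_le_pow_right (by norm_num)
              omega
            · have h0 : n - t = 0 := by omega
              rw [h0]
              simp
  have h2n : ((2 : ℤ) ^ n) = ((2 ^ n : ℕ) : ℤ) := by push_cast; ring
  rw [hncard]
  have : (2 : ℕ) ^ n - n * 2 ^ (n - (t - b)) ≤ G.card →
      (2 : ℤ) ^ n - n * 2 ^ (n - (t - b)) ≤ (G.card : ℤ) := by
    intro h
    have h' : (K.card : ℤ) ≤ (n : ℤ) * 2 ^ (n - (t - b)) := by exact_mod_cast hKbound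
    have hsum' : (G.card : ℤ) + K.card = 2 ^ n := by exact_mod_cast hsum
    linarith
  apply this
  omega
end

section
/- For all positive integers n and b with ⌈log_2 n⌉ + b + 1 ≤ n, setting t = ⌈log_2 n⌉ + b + 1 gives |C_3(n,≤b,t)| ≥ 2^{n−1}; that is, the redundancy n − log_2 |C_3(n,≤b,t)| is at most one bit. -/
/-- Extend a vector on `Fin n` to `ℕ` by zero. -/
def myext {n : ℕ} (c : Fin n → ZMod 2) : ℕ → ZMod 2 :=
  fun i => if h : i < n then c ⟨i, h⟩ else 0

lemma myext_eq {n : ℕ} (c : Fin n → ZMod 2) {i : ℕ} (h : i < n) :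
    myext c i = c ⟨i, h⟩ := dif_pos h

/-- The window `[s, s+T)` has period `ℓ`. -/
def BadP (n ℓ s T : ℕ) (c : Fin n → ZMod 2) : Prop :=
  ∀ j : ℕ, j < T → j + ℓ + 1 ≤ T → myext c (s + j) = myext c (s + j + ℓ)

instance (n ℓ s T : ℕ) : DecidablePred (BadP n ℓ s T) := fun c => by
  unfold BadP; infer_instance

lemma card_bad (n ℓ s T : ℕ) (h1 : 1 ≤ ℓ) (h2 : ℓ < T) (h3 : s + T ≤ n) :
    (Finset.univ.filter (BadP n ℓ s T)).card ≤ 2 ^ (n - (T - ℓ)) := by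
  set m := n - (T - ℓ) with hm
  have hc2 : Fintype.card (ZMod 2) = 2 := rfl
  have htarget : (Finset.univ : Finset (Fin m → ZMod 2)).card = 2 ^ m := by
    simp [Fintype.card_fun]
  rw [← htarget]
  apply Finset.card_le_card_of_injOn
    (fun c i => myext c (if i.val < s + ℓ then i.val else i.val + (T - ℓ)))
  · intro c _; exact Finset.mem_univ _
  · intro c hc c' hc' hfc
    rw [Finset.mem_coe, Finset.mem_filter] at hc hc'
    have hB := hc.2
    have hB' := hc'.2
    suffices H : ∀ k : ℕ, ∀ hk : k < n, c ⟨k, hk⟩ = c' ⟨k, hk⟩ by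
      funext i
      have := H i.val i.isLt
      simpa using this
    intro k
    induction k using Nat.strong_induction_on with
    | _ k IH =>
      intro hk
      by_cases hD : s + ℓ ≤ k ∧ k < s + T
      · -- determined position
        obtain ⟨hD1, hD2⟩ := hD
        set j := k - (s + ℓ) with hj
        have hkj : k = s + j + ℓ := by omega
        have hjT : j + ℓ + 1 ≤ T := by omega
        have hjlt : j < T := by omega
        have hsj : s + j < n := by omega
        have e1 := hB j hjlt hjT
        have e2 := hB' j hjlt hjT
        rw [myext_eq c hsj, myext_eq c (by omega : s + j + ℓ < n)] at e1
        rw [myext_eq c' hsj, myext_eq c' (by omega : s + j + ℓ < n)] at e2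
        have hIH : c ⟨s + j, hsj⟩ = c' ⟨s + j, hsj⟩ := IH (s + j) (by omega) hsj
        have heq : c ⟨s + j + ℓ, by omega⟩ = c' ⟨s + j + ℓ, by omega⟩ := by
          rw [← e1, ← e2, hIH]
        have hfin : (⟨k, hk⟩ : Fin n) = ⟨s + j + ℓ, by omega⟩ := Fin.ext hkj
        rw [hfin]; exact heq
      · -- free position: recovered from the restriction
        have hslm : s + ℓ ≤ m := by omega
        rcases Nat.lt_or_ge k (s + ℓ) with hlt | hge
        · have hkm : k < m := by omega
          have := congrFun hfc ⟨k, hkm⟩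
          simp only [hlt, if_pos] at this
          rw [myext_eq c hk, myext_eq c' hk] at this
          exact this
        · have hge2 : s + T ≤ k := by omega
          have hkm : k - (T - ℓ) < m := by omega
          have := congrFun hfc ⟨k - (T - ℓ), hkm⟩
          have hcond : ¬ (k - (T - ℓ) < s + ℓ) := by omega
          simp only [hcond, if_neg, if_false] at this
          have hkk : k - (T - ℓ) + (T - ℓ) = k := by omega
          rw [hkk, myext_eq c hk, myext_eq c' hk] at this
          exact this

lemma notMem_bad (n b t : ℕ) (c : Fin n → ZMod 2) (hc : c ∉ C3set n b t) :
    ∃ ℓ ∈ Finset.Icc 1 b, ∃ s ∈ Finset.range (n - t), BadP n ℓ s (t + 1) c := by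
  simp only [C3set, Set.mem_setOf_eq, not_forall] at hc
  obtain ⟨ℓ, h1, h2, h3⟩ := hc
  simp only [LLe, not_forall] at h3
  obtain ⟨len, hhas, hlen⟩ := h3
  rw [not_le] at hlen
  obtain ⟨s, hs, hper⟩ := hhas
  refine ⟨ℓ, Finset.mem_Icc.mpr ⟨h1, h2⟩, s, Finset.mem_range.mpr (by omega), ?_⟩
  intro j hj hjT
  have hj' : j + ℓ + 1 ≤ len := by omega
  have := hper j hj'
  rw [myext_eq c (by omega : s + j < n), myext_eq c (by omega : s + j + ℓ < n)]
  exact this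

lemma sum_two_pow_le (k : ℕ) : ∑ i ∈ Finset.range k, 2 ^ i < 2 ^ k := by
  induction k with
  | zero => simp
  | succ k ih => rw [Finset.sum_range_succ, pow_succ]; omega

/-- for `t = ⌈log₂ n⌉ + b + 1 ≤ n`, the code `C_3(n,≤b,t)` has
size at least `2^{n-1}`, i.e. redundancy at most one bit. -/
theorem stmt11 (n b : ℕ) (hn : 1 ≤ n) (hb : 1 ≤ b)
    (h : Nat.clog 2 n + b + 1 ≤ n) :
    2 ^ (n - 1) ≤ (C3set n b (Nat.clog 2 n + b + 1)).ncard := by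
  classical
  set t := Nat.clog 2 n + b + 1 with ht
  -- the code as a Finset
  set G : Finset (Fin n → ZMod 2) := Finset.univ.filter (· ∈ C3set n b t) with hG
  have hGset : C3set n b t = ↑G := by
    ext c; simp [hG]
  rw [hGset, Set.ncard_coe_finset]
  set N : Finset (Fin n → ZMod 2) := Finset.univ.filter (· ∉ C3set n b t) with hN
  have hcardtot : G.card + N.card = 2 ^ n := by
    rw [hG, hN, Finset.card_filter_add_card_filter_not]
    simp [Fintype.card_fun]
  -- union bound on the bad set
  have hsub : N ⊆ (Finset.Icc 1 b ×ˢ Finset.range (n - t)).biUnion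
      (fun p => Finset.univ.filter (BadP n p.1 p.2 (t + 1))) := by
    intro c hc
    rw [hN, Finset.mem_filter] at hc
    obtain ⟨ℓ, hℓ, s, hs, hbad⟩ := notMem_bad n b t c hc.2
    exact Finset.mem_biUnion.mpr ⟨(ℓ, s), Finset.mem_product.mpr ⟨hℓ, hs⟩,
      Finset.mem_filter.mpr ⟨Finset.mem_univ _, hbad⟩⟩
  have hNle : N.card ≤ 2 ^ (n - 1) := by
    calc N.card ≤ ((Finset.Icc 1 b ×ˢ Finset.range (n - t)).biUnion
        (fun p => Finset.univ.filter (BadP n p.1 p.2 (t + 1)))).card :=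
          Finset.card_le_card hsub
      _ ≤ ∑ p ∈ Finset.Icc 1 b ×ˢ Finset.range (n - t),
            (Finset.univ.filter (BadP n p.1 p.2 (t + 1))).card :=
          Finset.card_biUnion_le
      _ ≤ ∑ p ∈ Finset.Icc 1 b ×ˢ Finset.range (n - t), 2 ^ (n - (t + 1 - p.1)) := by
          apply Finset.sum_le_sum
          intro p hp
          rw [Finset.mem_product, Finset.mem_Icc, Finset.mem_range] at hp
          exact card_bad n p.1 p.2 (t + 1) hp.1.1 (by omega) (by omega)
      _ ≤ 2 ^ (n - 1) := by
          rcases Nat.eq_zero_or_pos (n - t) with h0 | hpos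
          · rw [h0]; simp
          have htn : t < n := by omega
          rw [Finset.sum_product]
          have hclog : n ≤ 2 ^ Nat.clog 2 n := Nat.le_pow_clog (by norm_num) n
          calc ∑ ℓ ∈ Finset.Icc 1 b, ∑ _s ∈ Finset.range (n - t), 2 ^ (n - (t + 1 - ℓ))
              = ∑ ℓ ∈ Finset.Icc 1 b, (n - t) * 2 ^ (n - (t + 1 - ℓ)) := by
                simp [Finset.sum_const, mul_comm]
            _ ≤ ∑ ℓ ∈ Finset.Icc 1 b, n * (2 ^ (n - t - 1) * 2 ^ ℓ) := by
                apply Finset.sum_le_sum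
                intro ℓ hℓ
                rw [Finset.mem_Icc] at hℓ
                have : n - (t + 1 - ℓ) = (n - t - 1) + ℓ := by omega
                rw [this, pow_add]
                exact Nat.mul_le_mul_right _ (by omega)
            _ = n * 2 ^ (n - t - 1) * ∑ ℓ ∈ Finset.Icc 1 b, 2 ^ ℓ := by
                rw [Finset.mul_sum]; ring_nf
            _ ≤ n * 2 ^ (n - t - 1) * 2 ^ (b + 1) := by
                apply Nat.mul_le_mul_left
                calc ∑ ℓ ∈ Finset.Icc 1 b, 2 ^ ℓ
                    ≤ ∑ ℓ ∈ Finset.range (b + 1), 2 ^ ℓ := by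
                      apply Finset.sum_le_sum_of_subset
                      intro x hx
                      rw [Finset.mem_Icc] at hx
                      exact Finset.mem_range.mpr (by omega)
                  _ ≤ 2 ^ (b + 1) := (sum_two_pow_le (b + 1)).le
            _ ≤ 2 ^ Nat.clog 2 n * 2 ^ (n - t - 1) * 2 ^ (b + 1) := by
                exact Nat.mul_le_mul_right _ (Nat.mul_le_mul_right _ hclog)
            _ = 2 ^ (Nat.clog 2 n + (n - t - 1) + (b + 1)) := by
                rw [pow_add, pow_add]; ring
            _ = 2 ^ (n - 1) := by
                congr 1
                omega
  have h2n : 2 ^ n = 2 ^ (n - 1) + 2 ^ (n - 1) := by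
    conv_lhs => rw [show n = n - 1 + 1 by omega]
    rw [pow_succ]; ring
  omega
end

section
/- (Theorem 8: three-head double-deletion correction.) Let t_1 ≥ 2 and t = 2(t_1 − 1). Let c, c' ∈ C_3(n,≤2,t_1), let 1 ≤ i_1 < i_2 with i_2 + 2t ≤ n, and let 1 ≤ i_1' < i_2' with i_2' + 2t ≤ n. If c({δ_{i_1}, δ_{i_2}}) = c'({δ_{i_1'}, δ_{i_2'}}), c({δ_{i_1+t}, δ_{i_2+t}}) = c'({δ_{i_1'+t}, δ_{i_2'+t}}), and c({δ_{i_1+2t}, δ_{i_2+2t}}) = c'({δ_{i_1'+2t}, δ_{i_2'+2t}}), then c = c'. (Thus C_3(n,≤2,t_1) is a three-head double-deletion-correcting code when the distance between adjacent heads is t = 2(t_1−1).) -/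
/-- `c({δ_{i₁}, δ_{i₂}})`: delete the two coordinates of `c` at the 1-indexed
positions `i₁ < i₂`. -/
def delete2 {n : ℕ} (c : Fin n → ZMod 2) (i1 i2 : ℕ) : Fin (n - 2) → ZMod 2 :=
  fun j =>
    if _h1 : j.val + 1 < i1 then c ⟨j.val, by have := j.isLt; omega⟩
    else if _h2 : j.val + 2 < i2 then c ⟨j.val + 1, by have := j.isLt; omega⟩
    else c ⟨j.val + 2, by have := j.isLt; omega⟩

/-- Pointwise consequence of equality of two deletion patterns. -/
lemma rel2 {n : ℕ} {c c' : Fin n → ZMod 2} {i1 i2 i1' i2' : ℕ}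
    (h : delete2 c i1 i2 = delete2 c' i1' i2')
    {j u v : ℕ} (hj : j + 2 < n)
    (hu : (if j + 1 < i1 then j else if j + 2 < i2 then j + 1 else j + 2) = u)
    (hv : (if j + 1 < i1' then j else if j + 2 < i2' then j + 1 else j + 2) = v)
    (hun : u < n) (hvn : v < n) :
    c ⟨u, hun⟩ = c' ⟨v, hvn⟩ := by
  have hj2 : j < n - 2 := by omega
  have H := congrFun h ⟨j, hj2⟩
  simp only [delete2] at H
  split_ifs at H hu hv <;> subst hu <;> subst hv <;> exact H

/-- A constant window of length `len` gives `len ≤ t1`. -/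
lemma const_window {n t1 : ℕ} {c : Fin n → ZMod 2} (hL : LLe c 1 t1)
    (s len : ℕ) (hsn : s + len ≤ n)
    (hrel : ∀ j : ℕ, s ≤ j → j + 2 ≤ s + len →
      ∀ (hx : j < n) (hy : j + 1 < n), c ⟨j, hx⟩ = c ⟨j + 1, hy⟩) :
    len ≤ t1 := by
  apply hL len
  refine ⟨s, hsn, fun j hj => ?_⟩
  exact hrel (s + j) (by omega) (by omega) (by omega) (by omega)

/-- A period-2 window of length `len` gives `len ≤ t1`. -/
lemma per2_window {n t1 : ℕ} {c : Fin n → ZMod 2} (hL : LLe c 2 t1)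
    (s len : ℕ) (hsn : s + len ≤ n)
    (hrel : ∀ j : ℕ, s ≤ j → j + 3 ≤ s + len →
      ∀ (hx : j < n) (hy : j + 2 < n), c ⟨j, hx⟩ = c ⟨j + 2, hy⟩) :
    len ≤ t1 := by
  apply hL len
  refine ⟨s, hsn, fun j hj => ?_⟩
  exact hrel (s + j) (by omega) (by omega) (by omega) (by omega)

/-- Core lemma for the first deletion positions: if reads 0 and 1 agree,
the first deletion position of `c'` is less than `i1 + t`. -/
lemma core1 {n t1 t : ℕ} (ht1 : 2 ≤ t1) (ht : t = 2 * (t1 - 1))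
    {c c' : Fin n → ZMod 2} (hc : c ∈ C3set n 2 t1)
    {i1 i2 i1' i2' : ℕ}
    (hi1 : 1 ≤ i1) (h12 : i1 < i2) (h2n : i2 + 2 * t ≤ n)
    (h0 : delete2 c i1 i2 = delete2 c' i1' i2')
    (h1 : delete2 c (i1 + t) (i2 + t) = delete2 c' (i1' + t) (i2' + t)) :
    i1' < i1 + t := by
  by_contra hcon
  push_neg at hcon
  have htt : 2 ≤ t := by omega
  have hL1 : LLe c 1 t1 := hc 1 le_rfl (by omega)
  have hL2 : LLe c 2 t1 := hc 2 (by omega) le_rfl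
  -- equality region from read 1 : c_j = c'_j for j + 1 ≤ i1 + t - 1
  have heq : ∀ j : ℕ, j + 1 < i1 + t → ∀ (hx : j < n) (hy : j < n),
      c ⟨j, hx⟩ = c' ⟨j, hy⟩ := by
    intro j hj hx hy
    exact rel2 h1 (j := j) (by omega) (by split_ifs <;> omega) (by split_ifs <;> omega) hx hy
  -- constant relations
  have hconst : ∀ j : ℕ, i1 - 1 ≤ j → j + 2 < i2 → j + 2 ≤ i1 + t →
      ∀ (hx : j < n) (hy : j + 1 < n), c ⟨j, hx⟩ = c ⟨j + 1, hy⟩ := by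
    intro j hj1 hj2 hj3 hx hy
    have e1 : c ⟨j + 1, hy⟩ = c' ⟨j, hx⟩ :=
      rel2 h0 (j := j) (by omega) (by split_ifs <;> omega) (by split_ifs <;> omega) hy hx
    have e2 : c ⟨j, hx⟩ = c' ⟨j, hx⟩ := heq j (by omega) hx hx
    rw [e2, ← e1]
  -- period-2 relations
  have hper : ∀ j : ℕ, i2 - 2 ≤ j → j + 2 ≤ i1 + t →
      ∀ (hx : j < n) (hy : j + 2 < n), c ⟨j, hx⟩ = c ⟨j + 2, hy⟩ := by
    intro j hj1 hj3 hx hy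
    have e1 : c ⟨j + 2, hy⟩ = c' ⟨j, hx⟩ :=
      rel2 h0 (j := j) (by omega) (by split_ifs <;> omega) (by split_ifs <;> omega) hy hx
    have e2 : c ⟨j, hx⟩ = c' ⟨j, hx⟩ := heq j (by omega) hx hx
    rw [e2, ← e1]
  rcases le_or_gt (i1 + t + 1) i2 with hcase | hcase
  · -- constant window [i1-1, i1+t-1], length t+1
    have hw : t + 1 ≤ t1 := by
      refine const_window hL1 (i1 - 1) (t + 1) (by omega) ?_
      intro j hj1 hj2 hx hy
      exact hconst j (by omega) (by omega) (by omega) hx hy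
    omega
  · rcases le_or_gt (t1 + 1) (i2 - i1) with hbig | hbig
    · -- constant window [i1-1, i2-2], length i2-i1
      have hw : i2 - i1 ≤ t1 := by
        refine const_window hL1 (i1 - 1) (i2 - i1) (by omega) ?_
        intro j hj1 hj2 hx hy
        exact hconst j (by omega) (by omega) (by omega) hx hy
      omega
    · -- period-2 window [i2-2, i1+t], length t+3-(i2-i1)
      have hw : t + 3 - (i2 - i1) ≤ t1 := by
        refine per2_window hL2 (i2 - 2) (t + 3 - (i2 - i1)) (by omega) ?_
        intro j hj1 hj2 hx hy
        exact hper j (by omega) (by omega) hx hy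
      omega

/-- Core lemma for the second deletion positions: if reads 1 and 2 agree,
the second deletion position of `c` is less than `i2' + t`. -/
lemma core2 {n t1 t : ℕ} (ht1 : 2 ≤ t1) (ht : t = 2 * (t1 - 1))
    {c c' : Fin n → ZMod 2} (hc : c ∈ C3set n 2 t1)
    {i1 i2 i1' i2' : ℕ}
    (hi1 : 1 ≤ i1) (h12 : i1 < i2) (h2n : i2 + 2 * t ≤ n)
    (h12' : i1' < i2')
    (h1 : delete2 c (i1 + t) (i2 + t) = delete2 c' (i1' + t) (i2' + t))
    (h2 : delete2 c (i1 + 2 * t) (i2 + 2 * t) = delete2 c' (i1' + 2 * t) (i2' + 2 * t)) :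
    i2 < i2' + t := by
  by_contra hcon
  push_neg at hcon
  have htt : 2 ≤ t := by omega
  have hL1 : LLe c 1 t1 := hc 1 le_rfl (by omega)
  have hL2 : LLe c 2 t1 := hc 2 (by omega) le_rfl
  -- equality region from read 1 (top) : c_j = c'_j for j ≥ i2+t
  have heq : ∀ j : ℕ, i2 + t ≤ j → ∀ (hx : j < n), c ⟨j, hx⟩ = c' ⟨j, hx⟩ := by
    intro j hj hx
    exact rel2 h1 (j := j - 2) (by omega) (by split_ifs <;> omega) (by split_ifs <;> omega) hx hx
  -- constant relations : c_j = c_{j+1} for max(i1+2t, i2+t-1) ≤ j ≤ i2+2t-2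
  have hconst : ∀ j : ℕ, i1 + 2 * t ≤ j → i2 + t - 1 ≤ j → j + 1 < i2 + 2 * t →
      ∀ (hx : j < n) (hy : j + 1 < n), c ⟨j, hx⟩ = c ⟨j + 1, hy⟩ := by
    intro j hj1 hj2 hj3 hx hy
    have e1 : c ⟨j, hx⟩ = c' ⟨j + 1, hy⟩ :=
      rel2 h2 (j := j - 1) (by omega) (by split_ifs <;> omega) (by split_ifs <;> omega) hx hy
    have e2 : c ⟨j + 1, hy⟩ = c' ⟨j + 1, hy⟩ := heq (j + 1) (by omega) hy
    rw [e1, ← e2]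
  -- period-2 relations : c_j = c_{j+2} for i2+t-2 ≤ j ≤ i1+2t-2
  have hper : ∀ j : ℕ, i2 + t - 2 ≤ j → j + 1 < i1 + 2 * t →
      ∀ (hx : j < n) (hy : j + 2 < n), c ⟨j, hx⟩ = c ⟨j + 2, hy⟩ := by
    intro j hj1 hj2 hx hy
    have e1 : c ⟨j, hx⟩ = c' ⟨j + 2, hy⟩ :=
      rel2 h2 (j := j) (by omega) (by split_ifs <;> omega) (by split_ifs <;> omega) hx hy
    have e2 : c ⟨j + 2, hy⟩ = c' ⟨j + 2, hy⟩ := heq (j + 2) (by omega) hy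
    rw [e1, ← e2]
  rcases le_or_gt (i1 + t + 1) i2 with hcase | hcase
  · -- constant window [i2+t-1, i2+2t-1], length t+1
    have hw : t + 1 ≤ t1 := by
      refine const_window hL1 (i2 + t - 1) (t + 1) (by omega) ?_
      intro j hj1 hj2 hx hy
      exact hconst j (by omega) (by omega) (by omega) hx hy
    omega
  · rcases le_or_gt (t1 + 1) (i2 - i1) with hbig | hbig
    · -- constant window [i1+2t, i2+2t-2], length i2-i1
      have hw : i2 - i1 ≤ t1 := by
        refine const_window hL1 (i1 + 2 * t) (i2 - i1) (by omega) ?_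
        intro j hj1 hj2 hx hy
        exact hconst j (by omega) (by omega) (by omega) hx hy
      omega
    · -- period-2 window [i2+t-2, i1+2t], length t+3-(i2-i1)
      have hw : t + 3 - (i2 - i1) ≤ t1 := by
        refine per2_window hL2 (i2 + t - 2) (t + 3 - (i2 - i1)) (by omega) ?_
        intro j hj1 hj2 hx hy
        exact hper j (by omega) (by omega) hx hy
      omega

/-- Theorem 8: `C_3(n,≤2,t₁)` is a three-head
double-deletion-correcting code when the distance between adjacent heads is
`t = 2(t₁-1)`. -/
theorem stmt13 {n t1 t : ℕ} (ht1 : 2 ≤ t1) (ht : t = 2 * (t1 - 1))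
    (c c' : Fin n → ZMod 2) (hc : c ∈ C3set n 2 t1) (hc' : c' ∈ C3set n 2 t1)
    (i1 i2 i1' i2' : ℕ)
    (hi1 : 1 ≤ i1) (h12 : i1 < i2) (h2n : i2 + 2 * t ≤ n)
    (hi1' : 1 ≤ i1') (h12' : i1' < i2') (h2n' : i2' + 2 * t ≤ n)
    (h0 : delete2 c i1 i2 = delete2 c' i1' i2')
    (h1 : delete2 c (i1 + t) (i2 + t) = delete2 c' (i1' + t) (i2' + t))
    (h2 : delete2 c (i1 + 2 * t) (i2 + 2 * t) = delete2 c' (i1' + 2 * t) (i2' + 2 * t)) :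
    c = c' := by
  have htt : 2 ≤ t := by omega
  have c1a : i1' < i1 + t := core1 ht1 ht hc hi1 h12 h2n h0 h1
  have c1b : i1 < i1' + t := core1 ht1 ht hc' hi1' h12' h2n' h0.symm h1.symm
  have c2a : i2 < i2' + t := core2 ht1 ht hc hi1 h12 h2n h12' h1 h2
  have c2b : i2' < i2 + t := core2 ht1 ht hc' hi1' h12' h2n' h12 h1.symm h2.symm
  funext k
  obtain ⟨k, hk⟩ := k
  by_cases hlow : k + 2 ≤ i1 + 2 * t ∧ k + 2 ≤ i1' + 2 * t
  · -- low region via read 2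
    exact rel2 h2 (j := k) (by omega) (by split_ifs <;> omega) (by split_ifs <;> omega) hk hk
  · by_cases hhigh : i2 ≤ k ∧ i2' ≤ k
    · -- high region via read 0 (j = k - 2)
      exact rel2 h0 (j := k - 2) (by omega) (by split_ifs <;> omega)
        (by split_ifs <;> omega) hk hk
    · -- middle region via read 1 (j = k - 1)
      exact rel2 h1 (j := k - 1) (by omega) (by split_ifs <;> omega)
        (by split_ifs <;> omega) hk hk
end

section
/- (Correction of d bursts of sticky insertions with d+1 heads.) Let t ≥ 2 and d ≥ 1. Let c, c' ∈ C_1(n,1,t). Let i_1 < i_2 < … < i_d and i_1' < i_2' < … < i_d' be positions in {1,…,n} with i_d + d·t ≤ n and i_d' + d·t ≤ n, and let b_1,…,b_d and b_1',…,b_d' be burst lengths, each between 1 and t−1. For 0 ≤ k ≤ d, let y_k denote the vector obtained from c by inserting, for each j = 1,…,d, b_j extra copies of the coordinate of c at position i_j + k·t immediately after that position, and let y_k' denote the vector obtained analogously from c' using positions i_j' + k·t and lengths b_j'. If y_k = y_k' for all k = 0, 1, …, d, then c = c'. (Thus C_1(n,1,t) can correct d bursts of sticky insertions, each of length at most t−1,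 using d+1 heads with adjacent heads at distance t.) -/
/-- Apply bursts of sticky insertions to `c`: for each 1-indexed position `p`,
insert `f p` extra copies of `c_p` immediately after position `p`. -/
def insertBursts {n : ℕ} (c : Fin n → ZMod 2) (f : ℕ → ℕ) : List (ZMod 2) :=
  (List.finRange n).flatMap (fun k => List.replicate (f (k.val + 1) + 1) (c k))

namespace Stmt16Aux

def Flen (f : ℕ → ℕ) (m : ℕ) : ℕ := ∑ q ∈ Finset.range m, (f (q+1) + 1)

lemma Flen_succ (f : ℕ → ℕ) (m : ℕ) : Flen f (m+1) = Flen f m + (f (m+1) + 1) :=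
  Finset.sum_range_succ _ _

lemma Flen_strictMono (f : ℕ → ℕ) : StrictMono (Flen f) :=
  strictMono_nat_of_lt_succ (fun m => by rw [Flen_succ]; omega)

lemma Flen_mono (f : ℕ → ℕ) : Monotone (Flen f) := (Flen_strictMono f).monotone

lemma flatMap_mem {α β : Type*} (g : α → List β) :
    ∀ (l : List α) (m x : ℕ) (hm : m < l.length),
      ((l.take m).flatMap g).length ≤ x →
      x < ((l.take (m+1)).flatMap g).length →
      ∀ hx : x < (l.flatMap g).length, (l.flatMap g)[x] ∈ g l[m]
  | [], m, x, hm, _, _, _ => absurd hm (by simp)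
  | a :: l, 0, x, hm, h1, h2, hx => by
      simp only [List.take_succ_cons, List.take_zero, List.flatMap_cons, List.flatMap_nil,
        List.length_append, List.length_nil] at h2
      rw [List.getElem_of_eq (List.flatMap_cons ..) hx,
        List.getElem_append_left (by omega)]
      simpa using List.getElem_mem (l := g a) (i := x) (by omega)
  | a :: l, m + 1, x, hm, h1, h2, hx => by
      simp only [List.take_succ_cons, List.flatMap_cons, List.length_append] at h1 h2
      rw [List.getElem_of_eq (List.flatMap_cons ..) hx,
        List.getElem_append_right (by omega)]
      rw [List.flatMap_cons] at hx
      simp only [List.getElem_cons_succ]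
      exact flatMap_mem g l m (x - (g a).length) (by simpa using hm) (by omega) (by omega) _

lemma length_take_flatMap {n : ℕ} (c : Fin n → ZMod 2) (f : ℕ → ℕ) :
    ∀ m : ℕ, m ≤ n →
      (((List.finRange n).take m).flatMap
        (fun k => List.replicate (f (k.val + 1) + 1) (c k))).length = Flen f m
  | 0, _ => by simp [Flen]
  | m + 1, hm => by
      rw [List.take_succ, List.flatMap_append, List.length_append,
        length_take_flatMap c f m (by omega), Flen_succ]
      have : (List.finRange n)[m]? = some ⟨m, by omega⟩ := by
        rw [List.getElem?_eq_getElem (by simpa using hm)]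
        simp
      simp [this]

lemma length_insertBursts {n : ℕ} (c : Fin n → ZMod 2) (f : ℕ → ℕ) :
    (insertBursts c f).length = Flen f n := by
  have := length_take_flatMap c f n le_rfl
  rwa [List.take_of_length_le (by simp)] at this


lemma getElem_insertBursts {n : ℕ} (c : Fin n → ZMod 2) (f : ℕ → ℕ) (m x : ℕ)
    (hm : m < n) (h1 : Flen f m ≤ x) (h2 : x < Flen f (m+1))
    (hx : x < (insertBursts c f).length) :
    (insertBursts c f)[x] = c ⟨m, hm⟩ := by
  have hmem := flatMap_mem (fun k : Fin n => List.replicate (f (k.val + 1) + 1) (c k))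
    (List.finRange n) m x (by simpa using hm)
    (by rw [length_take_flatMap c f m (by omega)]; exact h1)
    (by rw [length_take_flatMap c f (m+1) (by omega)]; exact h2) hx
  simp only [List.getElem_finRange] at hmem
  exact List.eq_of_mem_replicate hmem

/-- find the run element containing a position -/
lemma exists_index (f : ℕ → ℕ) (x : ℕ) :
    ∀ m' m : ℕ, m ≤ m' → Flen f m ≤ x → x < Flen f m' →
      ∃ j, m ≤ j ∧ j < m' ∧ Flen f j ≤ x ∧ x < Flen f (j+1)
  | 0, m, hm, h1, h2 => absurd (h1.trans_lt h2) (by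
      have := Flen_mono f (Nat.zero_le m); omega)
  | m' + 1, m, hm, h1, h2 => by
      by_cases h : Flen f m' ≤ x
      · have hmm : m ≤ m' := by
          by_contra hc
          have : m = m' + 1 := by omega
          subst this; omega
        exact ⟨m', hmm, by omega, h, h2⟩
      · have hmm : m ≤ m' := by
          by_contra hc
          have : m = m' + 1 := by omega
          subst this
          exact h ((Flen_mono f (by omega : m' ≤ m' + 1)).trans h1)
        obtain ⟨j, hj⟩ := exists_index f x m' m hmm h1 (by omega)
        exact ⟨j, hj.1, by omega, hj.2.2⟩

lemma Flen_eq {d : ℕ} (v : Fin d → ℕ) (b : Fin d → ℕ) (hv : ∀ j, 1 ≤ v j) (m : ℕ) :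
    Flen (fun p => ∑ j, if p = v j then b j else 0) m
      = m + ∑ j, if v j ≤ m then b j else 0 := by
  unfold Flen
  rw [Finset.sum_add_distrib]
  simp only [Finset.sum_const, Finset.card_range, smul_eq_mul, mul_one]
  rw [Finset.sum_comm, add_comm]
  congr 1
  apply Finset.sum_congr rfl
  intro j _
  have h1 : ∀ q ∈ Finset.range m, (if q + 1 = v j then b j else 0)
      = (if q = v j - 1 then b j else 0) := by
    intro q _
    have := hv j
    split_ifs <;> omega
  rw [Finset.sum_congr rfl h1, Finset.sum_ite_eq' (Finset.range m) (v j - 1) (fun _ => b j)]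
  have := hv j
  simp only [Finset.mem_range]
  split_ifs <;> omega

lemma window_split {d : ℕ} (v : Fin d → ℕ) (b : Fin d → ℕ) (m m' : ℕ) (h : m ≤ m') :
    (∑ j, if v j ≤ m' then b j else 0)
      = (∑ j, if v j ≤ m then b j else 0) + ∑ j, if m < v j ∧ v j ≤ m' then b j else 0 := by
  rw [← Finset.sum_add_distrib]
  apply Finset.sum_congr rfl
  intro j _
  split_ifs <;> omega

lemma pigeon {d t m ρ : ℕ} (hρ : ρ ≤ t) (v : Fin d → ℕ)
    (h : ∀ k : ℕ, k ≤ d → ∃ j : Fin d, m < v j + k * t ∧ v j + k * t ≤ m + ρ) : False := by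
  have hch : ∀ k : Fin (d+1), ∃ j : Fin d, m < v j + k.val * t ∧ v j + k.val * t ≤ m + ρ :=
    fun k => h k.val (by omega)
  choose ψ hψ1 hψ2 using hch
  have key : ∀ k1 k2 : Fin (d+1), k1.val < k2.val → ψ k1 ≠ ψ k2 := by
    intro k1 k2 hlt heq
    have h1 := hψ1 k1
    have h2 := hψ2 k2
    rw [← heq] at h2
    have : k1.val * t + t ≤ k2.val * t := by
      have h3 : (k1.val + 1) * t ≤ k2.val * t := Nat.mul_le_mul_right t (by omega)
      have h4 : (k1.val + 1) * t = k1.val * t + t := Nat.succ_mul _ _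
      omega
    omega
  have hinj : Function.Injective ψ := by
    intro k1 k2 heq
    rcases lt_trichotomy k1.val k2.val with h | h | h
    · exact absurd heq (key _ _ h)
    · exact Fin.ext h
    · exact absurd heq.symm (key _ _ h)
  have := Fintype.card_le_of_injective ψ hinj
  simp at this

lemma aux_le {n : ℕ} (c c' : Fin n → ZMod 2) (f f' : ℕ → ℕ) (m ρ ρ' : ℕ)
    (hm : m < n) (hρ'1 : 1 ≤ ρ') (hmρ : m + ρ ≤ n) (hmρ' : m + ρ' ≤ n)
    (hmax : ∀ h : m + ρ < n, c ⟨m + ρ, h⟩ ≠ c ⟨m, hm⟩)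
    (hconst' : ∀ j, m ≤ j → ∀ hj : j < m + ρ', c' ⟨j, by omega⟩ = c' ⟨m, hm⟩)
    (hcm : c ⟨m, hm⟩ = c' ⟨m, hm⟩)
    (hFm : Flen f m = Flen f' m) (hFn : Flen f n = Flen f' n)
    (hy : insertBursts c f = insertBursts c' f') :
    Flen f' (m + ρ') ≤ Flen f (m + ρ) := by
  by_contra hlt
  push_neg at hlt
  have hn : m + ρ < n := by
    by_contra h
    have heq : m + ρ = n := by omega
    rw [heq, hFn] at hlt
    exact absurd (Flen_mono f' hmρ') (by omega)
  set x := Flen f (m + ρ) with hxdef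
  have hxlen : x < (insertBursts c f).length := by
    rw [length_insertBursts, hFn]
    exact hlt.trans_le (Flen_mono f' hmρ')
  have h1 : (insertBursts c f)[x] = c ⟨m + ρ, hn⟩ :=
    getElem_insertBursts c f (m + ρ) x hn le_rfl (by rw [Flen_succ]; omega) hxlen
  have hxlen' : x < (insertBursts c' f').length := by rw [← hy]; exact hxlen
  obtain ⟨j, hj1, hj2, hj3, hj4⟩ := exists_index f' x (m + ρ') m (by omega)
    (by rw [← hFm]; exact Flen_mono f (by omega)) hlt
  have h2 : (insertBursts c' f')[x] = c' ⟨j, by omega⟩ :=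
    getElem_insertBursts c' f' j x (by omega) hj3 hj4 hxlen'
  have h12 : (insertBursts c f)[x] = (insertBursts c' f')[x]'hxlen' :=
    List.getElem_of_eq hy hxlen
  have : c ⟨m + ρ, hn⟩ = c ⟨m, hm⟩ := by
    rw [← h1, h12, h2, hconst' j hj1 hj2, ← hcm]
  exact hmax hn this

end Stmt16Aux


open Stmt16Aux in
/-- Theorem 11, part 1: `C_1(n,1,t)` can correct `d` bursts of
sticky insertions, each of length at most `t-1`, using `d+1` heads with adjacent
heads at distance `t`. -/
theorem stmt16 {n t d : ℕ} (ht : 2 ≤ t) (hd : 1 ≤ d)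
    (c c' : Fin n → ZMod 2) (hc : c ∈ C1set n t) (hc' : c' ∈ C1set n t)
    (i i' : Fin d → ℕ) (hmono : StrictMono i) (hmono' : StrictMono i')
    (hpos : ∀ j, 1 ≤ i j) (hpos' : ∀ j, 1 ≤ i' j)
    (hin : ∀ j, i j + d * t ≤ n) (hin' : ∀ j, i' j + d * t ≤ n)
    (b b' : Fin d → ℕ)
    (hb : ∀ j, 1 ≤ b j ∧ b j ≤ t - 1) (hb' : ∀ j, 1 ≤ b' j ∧ b' j ≤ t - 1)
    (hreads : ∀ k : ℕ, k ≤ d →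
      insertBursts c (fun p => ∑ j, if p = i j + k * t then b j else 0) =
      insertBursts c' (fun p => ∑ j, if p = i' j + k * t then b' j else 0)) :
    c = c' := by
  classical
  let fk : ℕ → ℕ → ℕ := fun k p => ∑ j, if p = i j + k * t then b j else 0
  let fk' : ℕ → ℕ → ℕ := fun k p => ∑ j, if p = i' j + k * t then b' j else 0
  have hreads2 : ∀ k : ℕ, k ≤ d → insertBursts c (fk k) = insertBursts c' (fk' k) := hreads
  have hFeq : ∀ k m : ℕ, Flen (fk k) m = m + ∑ j, if i j + k * t ≤ m then b j else 0 :=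
    fun k m => Flen_eq (fun j => i j + k * t) b (fun j => by show 1 ≤ i j + k * t; have := hpos j; omega) m
  have hFeq' : ∀ k m : ℕ, Flen (fk' k) m = m + ∑ j, if i' j + k * t ≤ m then b' j else 0 :=
    fun k m => Flen_eq (fun j => i' j + k * t) b' (fun j => by show 1 ≤ i' j + k * t; have := hpos' j; omega) m
  have hlen : ∀ k : ℕ, k ≤ d → Flen (fk k) n = Flen (fk' k) n := by
    intro k hk
    have h := congrArg List.length (hreads2 k hk)
    rwa [length_insertBursts, length_insertBursts] at h
  let Q : ℕ → Prop := fun m => m ≤ n ∧ (∀ j (hj : j < n), j < m → c ⟨j, hj⟩ = c' ⟨j, hj⟩)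
      ∧ ∀ k : ℕ, k ≤ d → Flen (fk k) m = Flen (fk' k) m
  have hQ0 : Q 0 := ⟨Nat.zero_le n, fun j hj h => absurd h (by omega),
    fun k hk => by simp [Flen]⟩
  have step : ∀ m, Q m → m < n → ∃ ρ, 1 ≤ ρ ∧ Q (m + ρ) := by
    intro m hQ hmn
    obtain ⟨hmn', hpre, hF⟩ := hQ
    -- run of c starting at m
    have hPex : ∃ r, m + r = n ∨ ∃ h : m + r < n, c ⟨m + r, h⟩ ≠ c ⟨m, hmn⟩ :=
      ⟨n - m, Or.inl (by omega)⟩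
    have hPex' : ∃ r, m + r = n ∨ ∃ h : m + r < n, c' ⟨m + r, h⟩ ≠ c' ⟨m, hmn⟩ :=
      ⟨n - m, Or.inl (by omega)⟩
    set ρ := Nat.find hPex with hρdef
    set ρ' := Nat.find hPex' with hρ'def
    have hPρ := Nat.find_spec hPex
    have hPρ' := Nat.find_spec hPex'
    rw [← hρdef] at hPρ
    rw [← hρ'def] at hPρ'
    have hρn : m + ρ ≤ n := by rcases hPρ with h | ⟨h, _⟩ <;> omega
    have hρ'n : m + ρ' ≤ n := by rcases hPρ' with h | ⟨h, _⟩ <;> omega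
    have hρ1 : 1 ≤ ρ := by
      rcases Nat.eq_zero_or_pos ρ with h | h
      · exfalso
        rw [h] at hPρ
        rcases hPρ with h' | ⟨h', hne⟩
        · omega
        · exact hne rfl
      · exact h
    have hρ'1 : 1 ≤ ρ' := by
      rcases Nat.eq_zero_or_pos ρ' with h | h
      · exfalso
        rw [h] at hPρ'
        rcases hPρ' with h' | ⟨h', hne⟩
        · omega
        · exact hne rfl
      · exact h
    have hconst : ∀ j, m ≤ j → ∀ hj : j < m + ρ, c ⟨j, by omega⟩ = c ⟨m, hmn⟩ := by
      intro j hmj hj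
      have hnot := Nat.find_min hPex (m := j - m) (by omega)
      push_neg at hnot
      have heq := hnot.2 (by omega)
      have hfin : (⟨m + (j - m), by omega⟩ : Fin n) = ⟨j, by omega⟩ := Fin.ext (by simp; omega)
      rwa [hfin] at heq
    have hconst' : ∀ j, m ≤ j → ∀ hj : j < m + ρ', c' ⟨j, by omega⟩ = c' ⟨m, hmn⟩ := by
      intro j hmj hj
      have hnot := Nat.find_min hPex' (m := j - m) (by omega)
      push_neg at hnot
      have heq := hnot.2 (by omega)
      have hfin : (⟨m + (j - m), by omega⟩ : Fin n) = ⟨j, by omega⟩ := Fin.ext (by simp; omega)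
      rwa [hfin] at heq
    have hmax : ∀ h : m + ρ < n, c ⟨m + ρ, h⟩ ≠ c ⟨m, hmn⟩ := by
      intro h
      rcases hPρ with h' | ⟨h', hne⟩
      · omega
      · exact hne
    have hmax' : ∀ h : m + ρ' < n, c' ⟨m + ρ', h⟩ ≠ c' ⟨m, hmn⟩ := by
      intro h
      rcases hPρ' with h' | ⟨h', hne⟩
      · omega
      · exact hne
    have hρt : ρ ≤ t := by
      refine hc ρ ⟨m, by omega, fun j hj => ?_⟩
      rw [hconst (m + j) (by omega) (by omega), hconst (m + j + 1) (by omega) (by omega)]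
    have hρ't : ρ' ≤ t := by
      refine hc' ρ' ⟨m, by omega, fun j hj => ?_⟩
      rw [hconst' (m + j) (by omega) (by omega), hconst' (m + j + 1) (by omega) (by omega)]
    -- c_m = c'_m
    have hcm : c ⟨m, hmn⟩ = c' ⟨m, hmn⟩ := by
      set x0 := Flen (fk 0) m with hx0
      have hx0len : x0 < (insertBursts c (fk 0)).length := by
        rw [length_insertBursts]; exact Flen_strictMono (fk 0) hmn
      have hx0len' : x0 < (insertBursts c' (fk' 0)).length := by
        rw [← hreads2 0 (by omega)]; exact hx0len
      have e1 : (insertBursts c (fk 0))[x0] = c ⟨m, hmn⟩ :=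
        getElem_insertBursts c (fk 0) m x0 hmn le_rfl (by rw [Flen_succ]; omega) hx0len
      have e2 : (insertBursts c' (fk' 0))[x0] = c' ⟨m, hmn⟩ :=
        getElem_insertBursts c' (fk' 0) m x0 hmn (le_of_eq (hF 0 (by omega)).symm)
          (by have h0 := hF 0 (Nat.zero_le d); rw [Flen_succ]; omega) hx0len'
      rw [← e1, ← e2]
      exact List.getElem_of_eq (hreads2 0 (by omega)) hx0len
    -- the key per-head equality
    have key : ∀ k : ℕ, k ≤ d → Flen (fk k) (m + ρ) = Flen (fk' k) (m + ρ') := by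
      intro k hk
      have hle1 := aux_le c c' (fk k) (fk' k) m ρ ρ' hmn hρ'1 hρn hρ'n hmax hconst' hcm
        (hF k hk) (hlen k hk) (hreads2 k hk)
      have hle2 := aux_le c' c (fk' k) (fk k) m ρ' ρ hmn hρ1 hρ'n hρn hmax' hconst hcm.symm
        (hF k hk).symm (hlen k hk).symm (hreads2 k hk).symm
      omega
    -- ρ = ρ' via pigeonhole
    have hρρ' : ρ = ρ' := by
      by_contra hne
      rcases Nat.lt_or_ge ρ ρ' with hlt | hge
      · refine pigeon (m := m) hρt (fun j => i j) (fun k hk => ?_)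
        have h1 := key k hk
        rw [hFeq, hFeq'] at h1
        have h2 := hF k hk
        rw [hFeq, hFeq'] at h2
        have hw := window_split (fun j => i j + k * t) b m (m + ρ) (by omega)
        have hw' := window_split (fun j => i' j + k * t) b' m (m + ρ') (by omega)
        beta_reduce at hw hw'
        have hWpos : (∑ j, if m < i j + k * t ∧ i j + k * t ≤ m + ρ then b j else 0) ≠ 0 := by
          omega
        obtain ⟨j, _, hj⟩ := Finset.exists_ne_zero_of_sum_ne_zero hWpos
        refine ⟨j, ?_, ?_⟩ <;> by_contra hcon <;> simp [hcon] at hj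
      · have hlt : ρ' < ρ := by omega
        refine pigeon (m := m) hρ't (fun j => i' j) (fun k hk => ?_)
        have h1 := key k hk
        rw [hFeq, hFeq'] at h1
        have h2 := hF k hk
        rw [hFeq, hFeq'] at h2
        have hw := window_split (fun j => i j + k * t) b m (m + ρ) (by omega)
        have hw' := window_split (fun j => i' j + k * t) b' m (m + ρ') (by omega)
        beta_reduce at hw hw'
        have hWpos : (∑ j, if m < i' j + k * t ∧ i' j + k * t ≤ m + ρ' then b' j else 0) ≠ 0 := by
          omega
        obtain ⟨j, _, hj⟩ := Finset.exists_ne_zero_of_sum_ne_zero hWpos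
        refine ⟨j, ?_, ?_⟩ <;> by_contra hcon <;> simp [hcon] at hj
    refine ⟨ρ, hρ1, hρn, ?_, ?_⟩
    · intro j hj hjm
      rcases Nat.lt_or_ge j m with h | h
      · exact hpre j hj h
      · rw [hconst j h (by omega), hconst' j h (by omega), hcm]
    · intro k hk
      rw [key k hk, hρρ']
  have main : ∀ fuel m, Q m → n ≤ m + fuel → Q n := by
    intro fuel
    induction fuel with
    | zero =>
      intro m hQ hle
      have hm : m = n := by have := hQ.1; omega
      exact hm ▸ hQ
    | succ fuel ih =>
      intro m hQ hle
      by_cases h : m < n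
      · obtain ⟨ρ, hρ, hQ'⟩ := step m hQ h
        exact ih (m + ρ) hQ' (by omega)
      · have hm : m = n := by have := hQ.1; omega
        exact hm ▸ hQ
  have hQn := main n 0 hQ0 (by omega)
  funext x
  have := hQn.2.1 x.val x.isLt x.isLt
  simpa using this
end

section
/- (Two-head single-position-error correction.) Let t ≥ 2 and let c, c' ∈ C_1(n,1,t). Let 1 ≤ i ≤ n−t and 1 ≤ i' ≤ n−t, and let w_1, w_2 be binary vectors. Suppose that either w_1 = c(δ_i) and w_2 = c(δ_{i+t}), or w_1 = σ_i(c) and w_2 = σ_{i+t}(c); and suppose likewise that either w_1 = c'(δ_{i'}) and w_2 = c'(δ_{i'+t}), or w_1 = σ_{i'}(c') and w_2 = σ_{i'+t}(c'). Then c = c'. (Thus C_1(n,1,t) is a two-head single-position-error-correcting code — correcting one deletion or one sticky insertion — when the two heads are at distance t.) -/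
/-- `c(δ_i)` as a sequence: delete the `i`-th coordinate (1-indexed) of `c`. -/
def deleteAtL {n : ℕ} (c : Fin n → ZMod 2) (i : ℕ) : List (ZMod 2) :=
  ((List.finRange n).filter (fun k => decide (k.val + 1 ≠ i))).map c

/-- `σ_i(c)` as a sequence: sticky insertion at position `i` (1-indexed), i.e.
insert an extra copy of `c_i` immediately after position `i`. -/
def stickyL {n : ℕ} (c : Fin n → ZMod 2) (i : ℕ) : List (ZMod 2) :=
  (List.finRange n).flatMap (fun k => if k.val + 1 = i then [c k, c k] else [c k])

/-!
Both heads read the same words, so with `a ≤ a'` the 0-indexed error positions of `c` and `c'`,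
the two codewords agree below `a + t` (second head) and above `a'` (first head), while on
`[a, a')` one is the other shifted by one place. If `a + t ≤ a'`, chaining these equalities gives
`x_k = x_{k+1}` for `a ≤ k < a + t` in one of the codewords `x`, a run of length `t + 1`; otherwise
the two ranges cover every position. A deletion and a sticky insertion give words of different
lengths.
-/

namespace List

variable {α : Type*}

def duplicateIdx (l : List α) (a : ℕ) : List α := l.take (a + 1) ++ l.drop a

theorem getElem?_duplicateIdx {l : List α} {a : ℕ} (ha : a < l.length) (j : ℕ) :
    (l.duplicateIdx a)[j]? = if j ≤ a then l[j]? else l[j - 1]? := by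
  rw [duplicateIdx]
  split_ifs with hj
  · rw [getElem?_append_left (by simp; omega), getElem?_take_of_lt (by omega)]
  · rw [getElem?_append_right (by simp; omega), getElem?_drop, length_take]
    congr 1
    omega

theorem replicate_infix_of_consecutive_eq {v : List α} {a m : ℕ} (hm : a + m < v.length)
    (hrun : ∀ k, a ≤ k → k < a + m → v[k]? = v[k + 1]?) :
    replicate (m + 1) v[a] <:+: v := by
  have hconst : ∀ j ≤ m, v[a + j]? = some v[a] := by
    intro j hj
    induction j with
    | zero => simp
    | succ j ih => rw [← add_assoc, ← hrun (a + j) (by omega) (by omega), ih (by omega)]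
  have hwindow : replicate (m + 1) v[a] = (v.drop a).take (m + 1) := by
    refine ext_getElem? fun j => ?_
    rw [getElem?_replicate, getElem?_take, getElem?_drop]
    split_ifs with hj
    · rw [hconst j (by omega)]
    · rfl
  rw [hwindow]
  exact (take_prefix _ _).isInfix.trans (drop_suffix _ _).isInfix

theorem eq_of_agree_off_shifted_window {u v : List α} {a a' t : ℕ}
    (hv : ∀ x, ¬ replicate (t + 1) x <:+: v) (hlen : a + t < v.length)
    (hlow : ∀ k < a + t, u[k]? = v[k]?) (hhigh : ∀ k, a' < k → u[k]? = v[k]?)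
    (hshift : ∀ k, a ≤ k → k < a' → u[k]? = v[k + 1]?) : u = v := by
  have ha' : a' < a + t := by
    by_contra! h
    exact hv _ (replicate_infix_of_consecutive_eq hlen fun k hak hk =>
      (hlow k hk).symm.trans (hshift k hak (by omega)))
  refine ext_getElem? fun k => ?_
  rcases lt_or_ge k (a + t) with hk | hk
  · exact hlow k hk
  · exact hhigh k (by omega)

theorem eq_of_eraseIdx_eq_of_eraseIdx_add_eq {l l' : List α} {a a' t : ℕ} (haa' : a ≤ a')
    (hl : ∀ x, ¬ replicate (t + 1) x <:+: l) (hlen : a + t < l.length)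
    (h₁ : l.eraseIdx a = l'.eraseIdx a') (h₂ : l.eraseIdx (a + t) = l'.eraseIdx (a' + t)) :
    l = l' := by
  have e₁ (j : ℕ) := congrArg (·[j]?) h₁
  have e₂ (j : ℕ) := congrArg (·[j]?) h₂
  simp only [getElem?_eraseIdx] at e₁ e₂
  refine (eq_of_agree_off_shifted_window (a' := a') hl hlen (fun k hk => ?_) (fun k hk => ?_)
    (fun k hk hk' => ?_)).symm
  · simpa [hk, show k < a' + t by omega] using (e₂ k).symm
  · obtain ⟨j, rfl⟩ : ∃ j, k = j + 1 := ⟨k - 1, by omega⟩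
    simpa [show ¬ j < a by omega, show ¬ j < a' by omega] using (e₁ j).symm
  · simpa [hk', show ¬ k < a by omega] using (e₁ k).symm

theorem eq_of_duplicateIdx_eq_of_duplicateIdx_add_eq {l l' : List α} {a a' t : ℕ} (haa' : a ≤ a')
    (hl' : ∀ x, ¬ replicate (t + 1) x <:+: l')
    (hlen : a' + t < l.length) (hlen' : a' + t < l'.length)
    (h₁ : l.duplicateIdx a = l'.duplicateIdx a')
    (h₂ : l.duplicateIdx (a + t) = l'.duplicateIdx (a' + t)) :
    l = l' := by
  have e₁ (j : ℕ) := congrArg (·[j]?) h₁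
  have e₂ (j : ℕ) := congrArg (·[j]?) h₂
  simp only [getElem?_duplicateIdx (by omega : a < l.length),
    getElem?_duplicateIdx (by omega : a' < l'.length),
    getElem?_duplicateIdx (by omega : a + t < l.length),
    getElem?_duplicateIdx hlen'] at e₁ e₂
  refine eq_of_agree_off_shifted_window (a := a) (a' := a') hl' (by omega) (fun k hk => ?_)
    (fun k hk => ?_) (fun k hk hk' => ?_)
  · simpa [show k ≤ a + t by omega, show k ≤ a' + t by omega] using e₂ k
  · simpa [show ¬ k + 1 ≤ a by omega, show ¬ k + 1 ≤ a' by omega] using e₁ (k + 1)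
  · simpa [show ¬ k + 1 ≤ a by omega, show k + 1 ≤ a' by omega] using e₁ (k + 1)

end List

theorem deleteAtL_succ_eq_eraseIdx {n : ℕ} (c : Fin n → ZMod 2) (a : ℕ) :
    deleteAtL c (a + 1) = (List.ofFn c).eraseIdx a := by
  induction n generalizing a with
  | zero => simp [deleteAtL]
  | succ n ih =>
    cases a with
    | zero => simp [deleteAtL, List.finRange_succ, List.filter_map, Function.comp_def,
        List.ofFn_eq_map]
    | succ a => simpa [deleteAtL, List.finRange_succ, List.filter_map, Function.comp_def]
        using ih (fun k => c k.succ) a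

theorem stickyL_succ_eq_duplicateIdx {n : ℕ} (c : Fin n → ZMod 2) (a : ℕ) :
    stickyL c (a + 1) = (List.ofFn c).duplicateIdx a := by
  induction n generalizing a with
  | zero => simp [stickyL, List.duplicateIdx]
  | succ n ih =>
    cases a with
    | zero => simp [stickyL, List.duplicateIdx, List.finRange_succ, List.flatMap_map,
        List.ofFn_eq_map, ← List.map_eq_flatMap]
    | succ a => simpa [stickyL, List.duplicateIdx, List.finRange_succ, List.flatMap_map]
        using ih (fun k => c k.succ) a

theorem not_replicate_infix_ofFn_of_LLe {n t : ℕ} {c : Fin n → ZMod 2} (hc : LLe c 1 t)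
    (x : ZMod 2) : ¬ List.replicate (t + 1) x <:+: List.ofFn c := by
  rintro ⟨s, s', hs⟩
  have hlen : s.length + (t + 1) ≤ n := by
    have := congrArg List.length hs
    simp only [List.length_append, List.length_replicate, List.length_ofFn] at this
    omega
  have hx : ∀ j ≤ t, (List.ofFn c)[s.length + j]? = some x := by
    intro j hj
    rw [← hs, List.append_assoc, List.getElem?_append_right (by omega),
      List.getElem?_append_left (by simp; omega)]
    simp [show j < t + 1 by omega]
  have hrun := hc (t + 1) ⟨s.length, hlen, fun j hj => ?_⟩
  · omega
  · have h₁ := hx j (by omega)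
    have h₂ := hx (j + 1) (by omega)
    rw [List.getElem?_ofFn, dif_pos (by omega)] at h₁ h₂
    exact Option.some.inj (h₁.trans h₂.symm)

theorem stmt17_general {n t : ℕ}
    (c c' : Fin n → ZMod 2) (hc : c ∈ C1set n t) (hc' : c' ∈ C1set n t)
    (i i' : ℕ) (hi : 1 ≤ i) (hin : i ≤ n - t) (hi' : 1 ≤ i') (hin' : i' ≤ n - t)
    (w1 w2 : List (ZMod 2))
    (h : (w1 = deleteAtL c i ∧ w2 = deleteAtL c (i + t)) ∨
         (w1 = stickyL c i ∧ w2 = stickyL c (i + t)))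
    (h' : (w1 = deleteAtL c' i' ∧ w2 = deleteAtL c' (i' + t)) ∨
          (w1 = stickyL c' i' ∧ w2 = stickyL c' (i' + t))) :
    c = c' := by
  wlog hii' : i ≤ i' generalizing c c' i i'
  · exact (this c' c hc' hc i' i hi' hin' hi hin h' h (by omega)).symm
  obtain ⟨a, rfl⟩ : ∃ a, i = a + 1 := ⟨i - 1, by omega⟩
  obtain ⟨a', rfl⟩ : ∃ a', i' = a' + 1 := ⟨i' - 1, by omega⟩
  simp only [Nat.add_right_comm _ 1 t, deleteAtL_succ_eq_eraseIdx,
    stickyL_succ_eq_duplicateIdx] at h h'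
  apply List.ofFn_injective
  rcases h with ⟨rfl, rfl⟩ | ⟨rfl, rfl⟩ <;> rcases h' with ⟨h₁, h₂⟩ | ⟨h₁, h₂⟩
  · exact List.eq_of_eraseIdx_eq_of_eraseIdx_add_eq (by omega)
      (not_replicate_infix_ofFn_of_LLe hc) (by simp; omega) h₁ h₂
  · exact absurd (congrArg List.length h₁)
      (by simp [List.length_eraseIdx, List.duplicateIdx, show a < n by omega]; omega)
  · exact absurd (congrArg List.length h₁)
      (by simp [List.length_eraseIdx, List.duplicateIdx, show a' < n by omega]; omega)
  · exact List.eq_of_duplicateIdx_eq_of_duplicateIdx_add_eq (by omega)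
      (not_replicate_infix_ofFn_of_LLe hc') (by simp; omega) (by simp; omega) h₁ h₂

/-- Theorem 11, part 2: `C_1(n,1,t)` is a two-head
single-position-error-correcting code (one deletion or one sticky insertion)
when the two heads are at distance `t`. -/
theorem stmt17 {n t : ℕ} (ht : 2 ≤ t)
    (c c' : Fin n → ZMod 2) (hc : c ∈ C1set n t) (hc' : c' ∈ C1set n t)
    (i i' : ℕ) (hi : 1 ≤ i) (hin : i ≤ n - t) (hi' : 1 ≤ i') (hin' : i' ≤ n - t)
    (w1 w2 : List (ZMod 2))
    (h : (w1 = deleteAtL c i ∧ w2 = deleteAtL c (i + t)) ∨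
         (w1 = stickyL c i ∧ w2 = stickyL c (i + t)))
    (h' : (w1 = deleteAtL c' i' ∧ w2 = deleteAtL c' (i' + t)) ∨
          (w1 = stickyL c' i' ∧ w2 = stickyL c' (i' + t))) :
    c = c' :=
  stmt17_general c c' hc hc' i i' hi hin hi' hin' w1 w2 h h'
end
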